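/- arXiv:1908.03022 — 8 statements merged into one kernel-verified Lean document; each statement's English description precedes it below -/
import Mathlib

section
/- Let G be a connected finite simple graph on vertex set V whose diameter is at most D and whose maximum vertex degree is at most Δ. Then for every finite set F ⊆ V of vertices and every pair of vertices u, v ∉ F that lie in the same connected component of the induced subgraph G[V ∖ F], the distance between u and v in G[V ∖ F] is at most (|F|·Δ + 1)·(2D + 1). -/
/-!
Take a shortest path `p` from `u` to `v` in `H = G[V ∖ F]` and suppose it is longer than
`m (2D + 1)` with `m = |F| Δ + 1`. The vertices `x k` of `p` at positions `k (2D + 1)`,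
`0 ≤ k ≤ m`, are pairwise more than `2D` apart in `H`. For `k ≥ 1`, a geodesic of `G` from
`x k` to `x 0` has length at most `D < dist_H (x k) (x 0)`, so it leaves `H`; just before it
does, it passes through a vertex of `H` adjacent to `F` within `H`-distance `D` of `x k`.
These `m` vertices are distinct, as the balls of radius `D` around the `x k` are disjoint,
yet `F` has at most `|F| Δ` neighbours.
-/

open Finset

namespace SimpleGraph

variable {V W : Type*} {G : SimpleGraph V}

lemma Walk.dist_getVert_getVert_of_length_eq_dist {u v : V} {p : G.Walk u v}
    (hp : p.length = G.dist u v) {i j : ℕ} (hij : i ≤ j) (hj : j ≤ p.length) :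
    G.dist (p.getVert i) (p.getVert j) = j - i := by
  have hsub : ((p.drop i).take (j - i)).IsSubwalk p :=
    (isSubwalk_take _ _).trans (isSubwalk_drop _ _)
  have := length_eq_dist_of_subwalk hp hsub
  rw [take_length, drop_length, drop_getVert, Nat.add_sub_cancel' hij] at this
  omega

lemma Walk.le_dist_getVert_mul_of_length_eq_dist {u v : V} {p : G.Walk u v}
    (hp : p.length = G.dist u v) {d n : ℕ} (hn : n * d ≤ p.length) {i j : ℕ} (hi : i ≤ n)
    (hj : j ≤ n) (hij : i ≠ j) : d ≤ G.dist (p.getVert (i * d)) (p.getVert (j * d)) := by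
  wlog hlt : i < j generalizing i j
  · rw [dist_comm]
    exact this hj hi hij.symm (by omega)
  rw [p.dist_getVert_getVert_of_length_eq_dist hp (by gcongr) (le_trans (by gcongr) hn),
    ← Nat.sub_mul]
  exact Nat.le_mul_of_pos_left d (by omega)

lemma Walk.length_induce {s : Set V} {u v : V} (w : G.Walk u v)
    (hw : ∀ x ∈ w.support, x ∈ s) : (w.induce s hw).length = w.length := by
  have := congrArg length (w.map_induce hw)
  rwa [length_map] at this

lemma Walk.exists_adj_compl_of_exists_notMem {s : Set V} {a b : V} (w : G.Walk a b)
    (ha : a ∈ s) (hw : ∃ x ∈ w.support, x ∉ s) :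
    ∃ c : s, ∃ f ∉ s, G.Adj c f ∧
      ∃ w' : (G.induce s).Walk ⟨a, ha⟩ c, w'.length < w.length := by
  induction w with
  | nil =>
    obtain ⟨x, hx, hxs⟩ := hw
    rw [support_nil, List.mem_singleton] at hx
    exact absurd (hx ▸ ha) hxs
  | @cons a x b hax q ih =>
    by_cases hx : x ∈ s
    · have hq : ∃ y ∈ q.support, y ∉ s := by
        obtain ⟨y, hy, hys⟩ := hw
        rw [support_cons, List.mem_cons] at hy
        exact ⟨y, hy.resolve_left (by rintro rfl; exact hys ha), hys⟩
      obtain ⟨c, f, hf, hcf, w', hw'⟩ := ih hx hq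
      have hax' : (G.induce s).Adj ⟨a, ha⟩ ⟨x, hx⟩ := induce_adj.2 hax
      exact ⟨c, f, hf, hcf, .cons hax' w', by simpa using hw'⟩
    · exact ⟨⟨a, ha⟩, x, hx, hax, .nil, by simp⟩

lemma exists_adj_compl_of_dist_lt_dist_induce {s : Set V} {a b : s}
    (h : G.dist a b < (G.induce s).dist a b) :
    ∃ c : s, ∃ f ∉ s, G.Adj c f ∧
      (G.induce s).Reachable a c ∧ (G.induce s).dist a c < G.dist a b := by
  have hH : (G.induce s).Reachable a b := Reachable.of_dist_ne_zero (by omega)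
  obtain ⟨w, hw⟩ : ∃ w : G.Walk a b, w.length = G.dist a b :=
    (hH.map (Embedding.induce s).toHom).exists_walk_length_eq_dist
  by_cases hws : ∀ x ∈ w.support, x ∈ s
  · have : (G.induce s).dist a b ≤ w.length :=
      (dist_le (w.induce s hws)).trans_eq (w.length_induce hws)
    omega
  · push Not at hws
    obtain ⟨c, f, hf, hcf, w', hw'⟩ := w.exists_adj_compl_of_exists_notMem a.2 hws
    exact ⟨c, f, hf, hcf, w'.reachable, (dist_le w').trans_lt (hw ▸ hw')⟩

lemma card_le_card_of_pairwise_lt_dist {ι : Type*} {H : SimpleGraph W} {I : Finset ι}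
    {N : Finset W} {x : ι → W} {r : ℕ}
    (hnear : ∀ i ∈ I, ∃ c ∈ N, H.Reachable (x i) c ∧ H.dist (x i) c ≤ r)
    (hfar : (I : Set ι).Pairwise fun i j ↦ 2 * r < H.dist (x i) (x j)) : #I ≤ #N := by
  refine card_le_card_of_forall_subsingleton
    (fun i c ↦ H.Reachable (x i) c ∧ H.dist (x i) c ≤ r) hnear
    fun c _ i ⟨hi, hic, hic'⟩ j ⟨hj, _, hjc'⟩ ↦ ?_
  by_contra hij
  have htri := hic.dist_triangle_left (x j)
  rw [dist_comm (u := c)] at htri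
  have := hfar hi hj hij
  omega

lemma card_biUnion_neighborFinset_le [Fintype V] [DecidableEq V] [DecidableRel G.Adj] {Δ : ℕ}
    (hdeg : ∀ v, G.degree v ≤ Δ) (F : Finset V) :
    #(F.biUnion fun f ↦ G.neighborFinset f) ≤ #F * Δ :=
  calc _ ≤ ∑ f ∈ F, #(G.neighborFinset f) := card_biUnion_le
    _ ≤ ∑ _f ∈ F, Δ := sum_le_sum fun f _ ↦ hdeg f
    _ = #F * Δ := by rw [sum_const, smul_eq_mul]

end SimpleGraph

open SimpleGraph

theorem stmt_1_general {V : Type} [Fintype V] [DecidableEq V] (G : SimpleGraph V)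
    [DecidableRel G.Adj] (D Δ : ℕ)
    (hdiam : ∀ u v : V, G.dist u v ≤ D)
    (hdeg : ∀ v : V, G.degree v ≤ Δ)
    (F : Finset V) (u v : V) (hu : u ∉ F) (hv : v ∉ F)
    (h : (G.induce {x : V | x ∉ F}).Reachable ⟨u, hu⟩ ⟨v, hv⟩) :
    (G.induce {x : V | x ∉ F}).dist ⟨u, hu⟩ ⟨v, hv⟩ ≤ (F.card * Δ + 1) * (2 * D + 1) := by
  set s : Set V := {x | x ∉ F}
  set H := G.induce s
  set m := #F * Δ + 1
  set N := (F.biUnion fun f ↦ G.neighborFinset f).subtype (· ∈ s)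
  by_contra! hlong
  obtain ⟨p, hp⟩ := h.exists_walk_length_eq_dist
  let x : ℕ → s := fun k ↦ p.getVert (k * (2 * D + 1))
  have hfar : ∀ i ≤ m, ∀ j ≤ m, i ≠ j → 2 * D < H.dist (x i) (x j) :=
    fun i hi j hj hij ↦
      p.le_dist_getVert_mul_of_length_eq_dist (d := 2 * D + 1) hp (by omega) hi hj hij
  have hnear : ∀ k ∈ Icc 1 m, ∃ c ∈ N, H.Reachable (x k) c ∧ H.dist (x k) c ≤ D := by
    intro k hk
    rw [mem_Icc] at hk
    have hGD := hdiam (x k) (x 0)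
    have hstretch : G.dist (x k) (x 0) < H.dist (x k) (x 0) := by
      have := hfar k hk.2 0 (by omega) (by omega)
      omega
    obtain ⟨c, f, hf, hcf, hreach, hc⟩ : ∃ c : s, ∃ f ∉ s, G.Adj c f ∧
        H.Reachable (x k) c ∧ H.dist (x k) c < G.dist (x k) (x 0) :=
      exists_adj_compl_of_dist_lt_dist_induce hstretch
    have hcN : c ∈ N := mem_subtype.2 <|
      mem_biUnion.2 ⟨f, by simpa [s] using hf, (G.mem_neighborFinset _ _).2 hcf.symm⟩
    exact ⟨c, hcN, hreach, by omega⟩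
  have hpack := card_le_card_of_pairwise_lt_dist hnear fun i hi j hj ↦ by
    simp only [coe_Icc, Set.mem_Icc] at hi hj
    exact hfar i hi.2 j hj.2
  have hN : #N ≤ #F * Δ := ((card_subtype _ _).trans_le (card_filter_le _ _)).trans
    (card_biUnion_neighborFinset_le hdeg F)
  rw [Nat.card_Icc] at hpack
  omega

/-- In a connected graph of diameter at most `D` and maximum degree at most `Δ`,
after deleting a finite set `F` of vertices, any two surviving vertices that remain in the
same connected component of the induced subgraph are at distance at most
`(|F|·Δ + 1) * (2D + 1)` therein. -/
theorem stmt_1 {V : Type} [Fintype V] [DecidableEq V] (G : SimpleGraph V)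
    [DecidableRel G.Adj] (D Δ : ℕ)
    (hconn : G.Connected) (hdiam : ∀ u v : V, G.dist u v ≤ D)
    (hdeg : ∀ v : V, G.degree v ≤ Δ)
    (F : Finset V) (u v : V) (hu : u ∉ F) (hv : v ∉ F)
    (h : (G.induce {x : V | x ∉ F}).Reachable ⟨u, hu⟩ ⟨v, hv⟩) :
    (G.induce {x : V | x ∉ F}).dist ⟨u, hu⟩ ⟨v, hv⟩ ≤ (F.card * Δ + 1) * (2 * D + 1) :=
  stmt_1_general G D Δ hdiam hdeg F u v hu hv h
end

section
/- There is an absolute constant c such that the following holds. For every connected finite simple graph G on n ≥ 2 vertices with diameter at most D and maximum degree at most Δ, every integer λ ≥ 1, and every pair of vertices s, t, there exists a subgraph H of G with at most (λ·Δ·D)^{c·λ}·⌈log n⌉ edges such that for every set F of vertices with F ⊆ V ∖ {s, t} and |F| ≤ λ, if s and t are connected in the induced subgraph G[V ∖ F], then s and t are connected in the subgraph of H induced on V ∖ F. -/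
open SimpleGraph

-- walk into induced subgraph
lemma walk_toInduce {V : Type} {G : SimpleGraph V} {S : Set V} {a b : V} (p : G.Walk a b)
    (hp : ∀ v ∈ p.support, v ∈ S) :
    ∃ q : (G.induce S).Walk ⟨a, hp a p.start_mem_support⟩ ⟨b, hp b p.end_mem_support⟩,
      q.length = p.length := by
  induction p with
  | nil => exact ⟨.nil, rfl⟩
  | @cons u c b h p ih =>
      obtain ⟨q, hq⟩ := ih (fun v hv => hp v (by simp [hv]))
      exact ⟨.cons (by exact h) q, by exact congrArg (· + 1) hq⟩

-- walk out of induced subgraph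
lemma walk_ofInduce {V : Type} {G : SimpleGraph V} {S : Set V} {a b : S}
    (q : (G.induce S).Walk a b) :
    ∃ p : G.Walk a.val b.val, p.length = q.length ∧ ∀ v ∈ p.support, v ∈ S := by
  refine ⟨(q.map (SimpleGraph.Embedding.induce S).toHom).copy
    (show (SimpleGraph.Embedding.induce S).toHom a = a.val from rfl)
    (show (SimpleGraph.Embedding.induce S).toHom b = b.val from rfl), by rw [Walk.length_copy, Walk.length_map], ?_⟩
  intro v hv
  rw [Walk.support_copy, Walk.support_map] at hv
  simp only [List.mem_map] at hv
  obtain ⟨w, _, rfl⟩ := hv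
  exact w.2

lemma exists_prefix {V : Type} {G : SimpleGraph V} :
    ∀ {u v : V} (p : G.Walk u v) (n : ℕ), ∃ q : G.Walk u (p.getVert n), q.length ≤ n := by
  intro u v p
  induction p with
  | nil => intro n; exact ⟨Walk.nil, by simp⟩
  | @cons u c v h p ih =>
      intro n
      match n with
      | 0 => exact ⟨(Walk.nil).copy rfl (p.cons h).getVert_zero.symm, by simp⟩
      | (n+1) =>
          obtain ⟨q, hq⟩ := ih n
          exact ⟨(Walk.cons h q).copy rfl (Walk.getVert_cons_succ p h).symm, by simp; omega⟩

lemma exists_suffix {V : Type} {G : SimpleGraph V} :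
    ∀ {u v : V} (p : G.Walk u v) (n : ℕ), ∃ q : G.Walk (p.getVert n) v, q.length ≤ p.length - n := by
  intro u v p
  induction p with
  | nil => intro n; exact ⟨(Walk.nil).copy (Walk.getVert_of_length_le Walk.nil (by simp)).symm rfl, by simp⟩
  | @cons u c v h p ih =>
      intro n
      match n with
      | 0 => exact ⟨(Walk.cons h p).copy (p.cons h).getVert_zero.symm rfl, by simp⟩
      | (n+1) =>
          obtain ⟨q, hq⟩ := ih n
          exact ⟨q.copy (Walk.getVert_cons_succ p h).symm rfl, by simp; omega⟩

-- first fault prefix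
lemma exists_border {V : Type} {G : SimpleGraph V} (σ : Finset V) :
    ∀ {a b : V} (Q : G.Walk a b) (_ : a ∉ σ) (_ : ∃ v ∈ Q.support, v ∈ σ),
    ∃ (x f : V) (R : G.Walk a x), x ∉ σ ∧ f ∈ σ ∧ G.Adj x f ∧
      (∀ v ∈ R.support, v ∉ σ) ∧ R.length ≤ Q.length := by
  intro a b Q
  induction Q with
  | nil =>
      intro ha hhit
      simp only [Walk.support_nil, List.mem_singleton] at hhit
      obtain ⟨v, rfl, hv⟩ := hhit
      exact absurd hv ha
  | @cons a c b h Q ih =>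
      intro ha hhit
      by_cases hc : c ∈ σ
      · exact ⟨a, c, Walk.nil, ha, hc, h, by simp [ha], by simp⟩
      · have hhit' : ∃ v ∈ Q.support, v ∈ σ := by
          obtain ⟨v, hv, hvσ⟩ := hhit
          simp only [Walk.support_cons, List.mem_cons] at hv
          rcases hv with rfl | hv
          · exact absurd hvσ ha
          · exact ⟨v, hv, hvσ⟩
        obtain ⟨x, f, R, hx, hf, hadj, hR, hlen⟩ := ih hc hhit'
        exact ⟨x, f, Walk.cons h R, hx, hf, hadj,
          by intro v hv; simp only [Walk.support_cons, List.mem_cons] at hv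
             rcases hv with rfl | hv; exact ha; exact hR v hv,
          by simp; omega⟩

lemma FD {V : Type} [Fintype V] [DecidableEq V] {G : SimpleGraph V} {D Δ lam : ℕ}
    (hconn : G.Connected) (hD : ∀ u v : V, G.dist u v ≤ D)
    (hΔ : ∀ v : V, (G.neighborSet v).ncard ≤ Δ)
    {s t : V} (σ : Finset V) (hσ : σ.card ≤ lam)
    (q : G.Walk s t) (hq : ∀ v ∈ q.support, v ∉ σ) :
    ∃ p : G.Walk s t, (∀ v ∈ p.support, v ∉ σ) ∧
      p.length ≤ (lam * Δ + 1) * (2 * D + 1) := by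
  classical
  set S : Set V := {x | x ∉ σ} with hS
  have hmem : ∀ v ∈ q.support, v ∈ S := fun v hv => hq v hv
  obtain ⟨q', -⟩ := walk_toInduce q hmem
  set G' := G.induce S
  set s' : S := ⟨s, hmem s q.start_mem_support⟩
  set t' : S := ⟨t, hmem t q.end_mem_support⟩
  have hr : G'.Reachable s' t' := ⟨q'⟩
  obtain ⟨p0, hp0⟩ := hr.exists_walk_length_eq_dist
  have hmin : ∀ w : G'.Walk s' t', p0.length ≤ w.length := by
    intro w; rw [hp0]; exact dist_le w
  set L := (lam * Δ + 1) * (2 * D + 1) with hL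
  -- suffices to bound p0
  suffices h : p0.length ≤ L by
    obtain ⟨p, hlen, hsupp⟩ := walk_ofInduce p0
    exact ⟨p, fun v hv => hsupp v hv, by omega⟩
  by_contra hcon
  push_neg at hcon
  set c1 := 2 * D + 1 with hc1
  set m := lam * Δ + 1 with hm
  set ℓ := p0.length with hℓ
  have hml : m * c1 < ℓ := hcon
  -- marks
  set u : ℕ → S := fun i => p0.getVert (i * c1) with hu
  -- lower bound on walks between marks
  have lower : ∀ i j : ℕ, i < j → j ≤ m → ∀ w : G'.Walk (u i) (u j),
      (j - i) * c1 ≤ w.length := by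
    intro i j hij hjm w
    obtain ⟨A, hA⟩ := exists_prefix p0 (i * c1)
    obtain ⟨B, hB⟩ := exists_suffix p0 (j * c1)
    have h1 : ℓ ≤ (A.append (w.append B)).length := hmin _
    rw [Walk.length_append, Walk.length_append] at h1
    have hjl : j * c1 ≤ ℓ := le_of_lt (lt_of_le_of_lt (Nat.mul_le_mul_right _ hjm) hml)
    have hij' : i * c1 + (j - i) * c1 = j * c1 := by
      rw [← Nat.add_mul]; congr 1; omega
    omega
  -- for each i < m produce a boundary vertex
  have claimX : ∀ i : ℕ, i < m → ∃ x : V, ∃ hx : x ∈ S, (∃ f ∈ σ, G.Adj x f) ∧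
      ∃ R : G'.Walk (u i) ⟨x, hx⟩, R.length ≤ D := by
    intro i hi
    obtain ⟨W, hW⟩ := hconn.exists_walk_length_eq_dist (u i).val (u (i+1)).val
    have hWD : W.length ≤ D := by rw [hW]; exact hD _ _
    by_cases hhit : ∃ v ∈ W.support, v ∈ σ
    · have ha : (u i).val ∉ σ := (u i).2
      obtain ⟨x, f, R, hx, hf, hadj, hR, hlen⟩ := exists_border σ W ha hhit
      have hmemR : ∀ v ∈ R.support, v ∈ S := fun v hv => hR v hv
      obtain ⟨R', hR'⟩ := walk_toInduce R hmemR
      exact ⟨x, hmemR x R.end_mem_support, ⟨f, hf, hadj⟩, R', by omega⟩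
    · push_neg at hhit
      have hmemW : ∀ v ∈ W.support, v ∈ S := fun v hv => hhit v hv
      obtain ⟨W', hW'⟩ := walk_toInduce W hmemW
      have hlow := lower i (i+1) (by omega) (by omega) W'
      have hone : i + 1 - i = 1 := by omega
      rw [hone, one_mul] at hlow
      omega
  choose xv hxS hxadj R hRD using claimX
  set NB : Finset V := σ.biUnion (fun f => (G.neighborSet f).toFinset) with hNB
  set g : ℕ → V := fun i => if hi : i < m then xv i hi else t with hg
  have hmaps : ∀ i ∈ Finset.range m, g i ∈ NB := by
    intro i hi
    rw [Finset.mem_range] at hi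
    simp only [hg, dif_pos hi]
    obtain ⟨f, hf, hadj⟩ := hxadj i hi
    rw [hNB, Finset.mem_biUnion]
    exact ⟨f, hf, by rw [Set.mem_toFinset]; exact hadj.symm⟩
  have key : ∀ i j : ℕ, ∀ hi : i < m, ∀ hj : j < m, i < j → xv i hi ≠ xv j hj := by
    intro i j hi hj hij heq
    have hsub : (⟨xv i hi, hxS i hi⟩ : S) = ⟨xv j hj, hxS j hj⟩ := Subtype.ext heq
    set w : G'.Walk (u i) (u j) :=
      (R i hi).append (((R j hj).reverse).copy hsub.symm rfl) with hw
    have hwlen : w.length ≤ 2 * D := by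
      have h1 := hRD i hi
      have h2 := hRD j hj
      have : w.length = (R i hi).length + (R j hj).length := by
        rw [hw, Walk.length_append, Walk.length_copy, Walk.length_reverse]
      omega
    have := lower i j hij (by omega) w
    have hc1le : c1 ≤ (j - i) * c1 := Nat.le_mul_of_pos_left c1 (by omega)
    omega
  have hinj : Set.InjOn g (Finset.range m) := by
    intro i hi j hj hgij
    rw [Finset.coe_range, Set.mem_Iio] at hi hj
    simp only [hg, dif_pos hi, dif_pos hj] at hgij
    by_contra hne
    rcases lt_or_gt_of_ne hne with h | h
    · exact key i j hi hj h hgij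
    · exact key j i hj hi h hgij.symm
  have hcard1 : m ≤ NB.card := by
    have := Finset.card_le_card_of_injOn g hmaps hinj
    simpa using this
  have hcard2 : NB.card ≤ lam * Δ := by
    calc NB.card ≤ ∑ f ∈ σ, (G.neighborSet f).toFinset.card := Finset.card_biUnion_le
    _ ≤ ∑ _f ∈ σ, Δ := by
        apply Finset.sum_le_sum
        intro f _
        rw [← Set.ncard_eq_toFinset_card']
        exact hΔ f
    _ = σ.card * Δ := by rw [Finset.sum_const, smul_eq_mul]
    _ ≤ lam * Δ := Nat.mul_le_mul_right _ hσ
  omega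

variable {V : Type} [DecidableEq V]

open scoped Classical in
noncomputable def treeEdges (G : SimpleGraph V) (s t : V) (L : ℕ) :
    ℕ → Finset V → Finset (Sym2 V)
  | 0, σ =>
      if h : ∃ p : G.Walk s t, (∀ v ∈ p.support, v ∉ σ) ∧ p.length ≤ L then
        h.choose.edges.toFinset
      else ∅
  | (k+1), σ =>
      if h : ∃ p : G.Walk s t, (∀ v ∈ p.support, v ∉ σ) ∧ p.length ≤ L then
        h.choose.edges.toFinset ∪
          h.choose.support.toFinset.biUnion (fun v => treeEdges G s t L k (insert v σ))
      else ∅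

lemma treeEdges_card (G : SimpleGraph V) (s t : V) (L : ℕ) :
    ∀ (k : ℕ) (σ : Finset V), (treeEdges G s t L k σ).card + 1 ≤ (L+1)^(k+2) := by
  intro k
  induction k with
  | zero =>
      intro σ
      rw [treeEdges]
      split_ifs with h
      · have hps := h.choose_spec
        set p := h.choose with hp
        have h1 : p.edges.toFinset.card ≤ p.edges.length := p.edges.toFinset_card_le
        have h2 : p.edges.length = p.length := p.length_edges
        have h3 : p.length ≤ L := hps.2
        have h4 : (L+1)^(0+2) = L*L + 2*L + 1 := by ring
        omega
      · have : (L+1)^(0+2) ≥ 1 := Nat.one_le_pow _ _ (by omega)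
        simpa using this
  | succ k ih =>
      intro σ
      rw [treeEdges]
      split_ifs with h
      · have hps := h.choose_spec
        set p := h.choose with hp
        have h1 : p.edges.toFinset.card ≤ L := by
          have a1 := p.edges.toFinset_card_le
          have a2 := p.length_edges
          have a3 : p.length ≤ L := hps.2
          omega
        have h2 : (p.support.toFinset.biUnion (fun v => treeEdges G s t L k (insert v σ))).card
            ≤ (L+1) * ((L+1)^(k+2) - 1) := by
          calc _ ≤ ∑ v ∈ p.support.toFinset, (treeEdges G s t L k (insert v σ)).card :=
                Finset.card_biUnion_le
          _ ≤ ∑ _v ∈ p.support.toFinset, ((L+1)^(k+2) - 1) := by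
                apply Finset.sum_le_sum
                intro v _
                have := ih (insert v σ)
                omega
          _ = p.support.toFinset.card * ((L+1)^(k+2) - 1) := by
                rw [Finset.sum_const, smul_eq_mul]
          _ ≤ (L+1) * ((L+1)^(k+2) - 1) := by
                apply Nat.mul_le_mul_right
                have a1 := p.support.toFinset_card_le
                have a2 := p.length_support
                have a3 : p.length ≤ L := hps.2
                omega
        have h3 : (L+1) * ((L+1)^(k+2) - 1) + (L+1) = (L+1)^(k+3) := by
          have hA : 1 ≤ (L+1)^(k+2) := Nat.one_le_pow _ _ (by omega)
          have : (L+1) * ((L+1)^(k+2) - 1) + (L+1) = (L+1) * ((L+1)^(k+2) - 1 + 1) := by ring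
          rw [this, Nat.sub_add_cancel hA, ← pow_succ']
        have h4 := Finset.card_union_le (p.edges.toFinset)
          (p.support.toFinset.biUnion (fun v => treeEdges G s t L k (insert v σ)))
        have hkk : (L+1)^(k+1+2) = (L+1)^(k+3) := rfl
        omega
      · have : 1 ≤ (L+1)^(k+1+2) := Nat.one_le_pow _ _ (by omega)
        simpa using this

lemma treeEdges_correct (G : SimpleGraph V) (s t : V) (L lam : ℕ)
    (FDex : ∀ σ : Finset V, σ.card ≤ lam →
      (∃ q : G.Walk s t, ∀ v ∈ q.support, v ∉ σ) →
      ∃ p : G.Walk s t, (∀ v ∈ p.support, v ∉ σ) ∧ p.length ≤ L) :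
    ∀ (k : ℕ) (σ F : Finset V), σ ⊆ F → F.card ≤ lam → (F \ σ).card ≤ k →
      (∃ q : G.Walk s t, ∀ v ∈ q.support, v ∉ F) →
      ∃ p : G.Walk s t, (∀ v ∈ p.support, v ∉ F) ∧
        ∀ e ∈ p.edges, e ∈ treeEdges G s t L k σ := by
  intro k
  induction k with
  | zero =>
      intro σ F hσF hF hFσ ⟨q, hq⟩
      have hFeq : F = σ := by
        have hempty : F \ σ = ∅ := Finset.card_eq_zero.mp (by omega)
        apply Finset.Subset.antisymm _ hσF
        intro v hv
        by_contra hvσ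
        have hmem : v ∈ F \ σ := Finset.mem_sdiff.mpr ⟨hv, hvσ⟩
        rw [hempty] at hmem
        exact absurd hmem (Finset.notMem_empty v)
      subst hFeq
      have h : ∃ p : G.Walk s t, (∀ v ∈ p.support, v ∉ F) ∧ p.length ≤ L :=
        FDex F (by omega) ⟨q, hq⟩
      refine ⟨h.choose, h.choose_spec.1, ?_⟩
      intro e he
      rw [treeEdges, dif_pos h]
      exact List.mem_toFinset.mpr he
  | succ k ih =>
      intro σ F hσF hF hFσ ⟨q, hq⟩
      have h : ∃ p : G.Walk s t, (∀ v ∈ p.support, v ∉ σ) ∧ p.length ≤ L :=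
        FDex σ (le_trans (Finset.card_le_card hσF) hF)
          ⟨q, fun v hv => fun hvσ => hq v hv (hσF hvσ)⟩
      by_cases havoid : ∀ v ∈ h.choose.support, v ∉ F
      · refine ⟨h.choose, havoid, ?_⟩
        intro e he
        rw [treeEdges, dif_pos h, Finset.mem_union]
        exact Or.inl (List.mem_toFinset.mpr he)
      · push_neg at havoid
        obtain ⟨v, hvsupp, hvF⟩ := havoid
        have hvσ : v ∉ σ := h.choose_spec.1 v hvsupp
        have hsub : insert v σ ⊆ F := Finset.insert_subset hvF hσF
        have hcard : (F \ insert v σ).card ≤ k := by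
          have hss : F \ insert v σ ⊂ F \ σ := by
            apply Finset.ssubset_iff_of_subset
              (Finset.sdiff_subset_sdiff le_rfl (Finset.subset_insert v σ)) |>.mpr
            exact ⟨v, Finset.mem_sdiff.mpr ⟨hvF, hvσ⟩, by simp⟩
          have := Finset.card_lt_card hss
          omega
        obtain ⟨p, hp1, hp2⟩ := ih (insert v σ) F hsub hF hcard ⟨q, hq⟩
        refine ⟨p, hp1, ?_⟩
        intro e he
        rw [treeEdges, dif_pos h, Finset.mem_union]
        refine Or.inr (Finset.mem_biUnion.mpr ⟨v, ?_, hp2 e he⟩)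
        exact List.mem_toFinset.mpr hvsupp

/-- There is an absolute constant `c` such that every connected graph on
`n ≥ 2` vertices with diameter at most `D` and maximum degree at most `Δ` admits, for every
`λ ≥ 1` and every pair of vertices `s, t`, a subgraph `H` with at most
`(λ·Δ·D)^(c·λ)·⌈log n⌉` edges such that for every set `F ⊆ V ∖ {s,t}` of at most `λ`
vertices, if `s` and `t` are connected in `G[V ∖ F]` then they are connected in the
subgraph of `H` induced on `V ∖ F`. -/
theorem stmt_4 :
    ∃ c : ℕ, ∀ (V : Type) [Fintype V] [DecidableEq V],
      ∀ (G : SimpleGraph V) (D Δ lam : ℕ) (s t : V),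
      G.Connected → (∀ u v : V, G.dist u v ≤ D) →
      (∀ v : V, (G.neighborSet v).ncard ≤ Δ) →
      2 ≤ Fintype.card V → 1 ≤ lam →
      ∃ H : SimpleGraph V, H ≤ G ∧
        H.edgeSet.ncard ≤ (lam * Δ * D) ^ (c * lam) * Nat.clog 2 (Fintype.card V) ∧
        ∀ (F : Finset V) (hs : s ∉ F) (ht : t ∉ F), F.card ≤ lam →
          (G.induce {x : V | x ∉ F}).Reachable ⟨s, hs⟩ ⟨t, ht⟩ →
          (H.induce {x : V | x ∉ F}).Reachable ⟨s, hs⟩ ⟨t, ht⟩ := by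
  classical
  refine ⟨12, ?_⟩
  intro V _ _ G D Δ lam s t hconn hD hΔ hn hlam
  have hclog : 1 ≤ Nat.clog 2 (Fintype.card V) := Nat.clog_pos (by omega) hn
  by_cases hP : 2 ≤ lam * Δ * D
  · -- main case
    set L := (lam * Δ + 1) * (2 * D + 1) with hL
    set T := treeEdges G s t L lam ∅ with hT
    set H := SimpleGraph.fromEdgeSet ((T : Set (Sym2 V)) ∩ G.edgeSet) with hH
    have hHG : H ≤ G := by
      rw [hH]
      calc SimpleGraph.fromEdgeSet ((T : Set (Sym2 V)) ∩ G.edgeSet)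
          ≤ SimpleGraph.fromEdgeSet G.edgeSet :=
            SimpleGraph.fromEdgeSet_mono Set.inter_subset_right
        _ = G := SimpleGraph.fromEdgeSet_edgeSet G
    have hΔ1 : 1 ≤ Δ := by by_contra h; push_neg at h; interval_cases Δ <;> simp_all
    have hD1 : 1 ≤ D := by by_contra h; push_neg at h; interval_cases D <;> simp_all
    refine ⟨H, hHG, ?_, ?_⟩
    · -- edge bound
      have h1 : H.edgeSet ⊆ (T : Set (Sym2 V)) := by
        rw [hH, SimpleGraph.edgeSet_fromEdgeSet]
        intro e he
        exact he.1.1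
      have h2 : H.edgeSet.ncard ≤ T.card := by
        have := Set.ncard_le_ncard h1 (T.finite_toSet)
        rwa [Set.ncard_coe_finset] at this
      have h3 : T.card + 1 ≤ (L + 1) ^ (lam + 2) := treeEdges_card G s t L lam ∅
      set P := lam * Δ * D with hPdef
      have hL1 : L + 1 ≤ 7 * P := by
        have : (lam * Δ + 1) * (2 * D + 1) ≤ 2 * (lam * Δ) * (3 * D) := by
          apply Nat.mul_le_mul
          · nlinarith
          · omega
        have h7 : 2 * (lam * Δ) * (3 * D) = 6 * P := by rw [hPdef]; ring
        omega
      have h7P : 7 * P ≤ P ^ 4 := by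
        have h8 : 8 ≤ P ^ 3 := by
          calc (8:ℕ) = 2 ^ 3 := by norm_num
            _ ≤ P ^ 3 := Nat.pow_le_pow_left hP 3
        calc 7 * P ≤ 8 * P := by omega
          _ ≤ P ^ 3 * P := Nat.mul_le_mul_right P h8
          _ = P ^ 4 := by ring
      have hpow : (L + 1) ^ (lam + 2) ≤ P ^ (12 * lam) := by
        calc (L + 1) ^ (lam + 2) ≤ (P ^ 4) ^ (lam + 2) :=
              Nat.pow_le_pow_left (hL1.trans h7P) _
          _ = P ^ (4 * (lam + 2)) := by rw [← pow_mul]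
          _ ≤ P ^ (12 * lam) := Nat.pow_le_pow_right (by omega) (by omega)
      calc H.edgeSet.ncard ≤ T.card := h2
        _ ≤ (L + 1) ^ (lam + 2) := by omega
        _ ≤ P ^ (12 * lam) := hpow
        _ ≤ P ^ (12 * lam) * Nat.clog 2 (Fintype.card V) :=
            Nat.le_mul_of_pos_right _ (by omega)
    · -- correctness
      intro F hs ht hFcard hreach
      obtain ⟨q'⟩ := hreach
      obtain ⟨q, hqlen, hqS⟩ := walk_ofInduce q'
      have FDex : ∀ σ : Finset V, σ.card ≤ lam →
          (∃ q0 : G.Walk s t, ∀ v ∈ q0.support, v ∉ σ) →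
          ∃ p : G.Walk s t, (∀ v ∈ p.support, v ∉ σ) ∧ p.length ≤ L := by
        rintro σ hσc ⟨q0, hq0⟩
        exact FD hconn hD hΔ σ hσc q0 hq0
      obtain ⟨p, hpF, hpT⟩ := treeEdges_correct G s t L lam FDex lam ∅ F
        (Finset.empty_subset F) hFcard (by simpa using hFcard)
        ⟨q, fun v hv => hqS v hv⟩
      have hedges : ∀ e ∈ p.edges, e ∈ H.edgeSet := by
        intro e he
        rw [hH, SimpleGraph.edgeSet_fromEdgeSet]
        have heG : e ∈ G.edgeSet := p.edges_subset_edgeSet he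
        exact ⟨⟨hpT e he, heG⟩, G.not_isDiag_of_mem_edgeSet heG⟩
      have hsupp : ∀ v ∈ (p.transfer H hedges).support, v ∈ {x : V | x ∉ F} := by
        intro v hv
        rw [Walk.support_transfer] at hv
        exact hpF v hv
      obtain ⟨pq, -⟩ := walk_toInduce (p.transfer H hedges) hsupp
      exact ⟨pq⟩
  · -- degenerate case
    push_neg at hP
    obtain ⟨u, v, huv⟩ := Fintype.exists_pair_of_one_lt_card (α := V) (by omega)
    have hΔ1 : 1 ≤ Δ := by
      obtain ⟨w⟩ := hconn.preconnected u v
      cases w with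
      | nil => exact absurd rfl huv
      | @cons _ x _ h w' =>
          have h1 : 0 < (G.neighborSet u).ncard :=
            (Set.ncard_pos (Set.toFinite _)).mpr ⟨x, h⟩
          have := hΔ u
          omega
    have hD1 : 1 ≤ D := lt_of_lt_of_le (hconn.pos_dist_of_ne huv) (hD u v)
    have hprod : lam * Δ * D = 1 := by
      have h1 : 0 < lam * Δ * D := Nat.mul_pos (Nat.mul_pos hlam hΔ1) hD1
      omega
    have hD1' : D = 1 := Nat.eq_one_of_mul_eq_one_left hprod
    have h12 : lam * Δ = 1 := Nat.eq_one_of_mul_eq_one_right hprod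
    have hlam1 : lam = 1 := Nat.eq_one_of_mul_eq_one_right h12
    have hΔ1' : Δ = 1 := Nat.eq_one_of_mul_eq_one_left h12
    -- G is complete, so card V = 2
    have hadj : ∀ a b : V, a ≠ b → G.Adj a b := by
      intro a b hab
      have h1 := hD a b
      have h2 := hconn.pos_dist_of_ne hab
      rw [hD1'] at h1
      have : G.dist a b = 1 := by omega
      exact SimpleGraph.dist_eq_one_iff_adj.mp this
    have hcard2 : Fintype.card V = 2 := by
      by_contra hc
      have h3 : 3 ≤ Fintype.card V := by omega
      -- u has at least two neighbors
      obtain ⟨w, hw⟩ : ∃ w : V, w ≠ u ∧ w ≠ v := by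
        have hc2 : ({u, v} : Finset V).card ≤ 2 := by
          calc ({u, v} : Finset V).card ≤ ({v} : Finset V).card + 1 :=
                Finset.card_insert_le u {v}
            _ = 2 := by simp
        have hcs := Finset.card_le_card_sdiff_add_card (s := (Finset.univ : Finset V))
          (t := ({u, v} : Finset V))
        rw [Finset.card_univ] at hcs
        have : 0 < ((Finset.univ : Finset V) \ {u, v}).card := by omega
        obtain ⟨w, hwmem⟩ := Finset.card_pos.mp this
        rw [Finset.mem_sdiff, Finset.mem_insert, Finset.mem_singleton] at hwmem
        push_neg at hwmem
        exact ⟨w, hwmem.2⟩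
      have hsub : {v, w} ⊆ G.neighborFinset u := by
        intro a ha
        rw [SimpleGraph.mem_neighborFinset]
        rcases Finset.mem_insert.mp ha with rfl | ha
        · exact hadj u a huv
        · rw [Finset.mem_singleton] at ha; subst ha
          exact hadj u a (fun h => hw.1 h.symm)
      have h2 : 2 ≤ (G.neighborFinset u).card := by
        calc 2 = ({v, w} : Finset V).card := by
              rw [Finset.card_insert_of_notMem (by simpa using Ne.symm hw.2), Finset.card_singleton]
          _ ≤ _ := Finset.card_le_card hsub
      have h4 : (G.neighborSet u).ncard = (G.neighborFinset u).card := by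
        rw [SimpleGraph.neighborFinset_def, Set.ncard_eq_toFinset_card']
      have := hΔ u
      omega
    refine ⟨G, le_rfl, ?_, fun F hs ht _ h => h⟩
    have hdeg : ∀ a : V, G.degree a ≤ 1 := by
      intro a
      have h4 : (G.neighborSet a).ncard = (G.neighborFinset a).card := by
        rw [SimpleGraph.neighborFinset_def, Set.ncard_eq_toFinset_card']
      have := hΔ a
      rw [← SimpleGraph.card_neighborFinset_eq_degree]
      omega
    have hsum := G.sum_degrees_eq_twice_card_edges
    have hsumle : ∑ a : V, G.degree a ≤ Fintype.card V := by
      calc ∑ a : V, G.degree a ≤ ∑ _a : V, 1 := Finset.sum_le_sum (fun a _ => hdeg a)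
        _ = Fintype.card V := by simp
    have hE : G.edgeFinset.card ≤ 1 := by omega
    have hE2 : G.edgeSet.ncard = G.edgeFinset.card := by
      rw [Set.ncard_eq_toFinset_card', Set.toFinset_card, ← SimpleGraph.edgeFinset_card]
    rw [hprod, one_pow, one_mul]
    omega
end

section
/- There is an absolute constant c such that the following holds. For all integers N ≥ 2 and a ≥ b ≥ 1 with a ≥ 2 and b ≤ a ≤ N, there exists a family 𝒢 of subsets of {1, …, N} with |𝒢| ≤ c·a^{b+1}·⌈log N⌉ such that for every pair of disjoint subsets A, B ⊆ {1, …, N} with |A| ≤ a and |B| ≤ b, there exists a set S ∈ 𝒢 satisfying A ⊆ S and B ∩ S = ∅. -/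
set_option maxHeartbeats 1000000

open Finset Real


lemma exp_two_lt : Real.exp 2 < 7.39 := by
  have h := Real.exp_one_lt_d9
  have h2 : Real.exp 2 = Real.exp 1 * Real.exp 1 := by
    rw [← Real.exp_add]; norm_num
  have hpos := Real.exp_pos 1
  rw [h2]; nlinarith

lemma L1 : ∀ b : ℕ, 1 ≤ b → Real.exp (2 * b) ≤ 16 * (b : ℝ) ^ b := by
  have he2 := exp_two_lt
  have hepos := Real.exp_pos 2
  intro b hb
  induction b with
  | zero => omega
  | succ n ih =>
    rcases Nat.lt_or_ge n 3 with hn | hn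
    · interval_cases n
      · push_cast; rw [mul_one, pow_one, mul_one]; nlinarith
      · have : Real.exp (2 * ((2:ℕ):ℝ)) = Real.exp 2 * Real.exp 2 := by
          rw [← Real.exp_add]; norm_num
        push_cast at this ⊢
        rw [this]; norm_num; nlinarith
      · have : Real.exp (2 * ((3:ℕ):ℝ)) = Real.exp 2 * Real.exp 2 * Real.exp 2 := by
          rw [← Real.exp_add, ← Real.exp_add]; norm_num
        push_cast at this ⊢
        rw [this]; norm_num; nlinarith
    · have hn1 : 1 ≤ n := by omega
      have ihn := ih hn1
      have hstep : Real.exp (2 * (n + 1 : ℕ)) = Real.exp (2 * n) * Real.exp 2 := by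
        rw [← Real.exp_add]; push_cast; ring
      rw [hstep]
      have h0 : (0:ℝ) < n := by positivity
      have hnn : (0:ℝ) < (n:ℝ) ^ n := by positivity
      have hber : (2 : ℝ) ≤ ((n + 1 : ℝ)/n) ^ n := by
        have hp : (0:ℝ) ≤ 1/n := by positivity
        have hb2 : (-2:ℝ) ≤ 1/n := by linarith
        have hpow := one_add_mul_le_pow hb2 n
        have heq : ((n:ℝ)+1)/n = 1 + 1/n := by field_simp
        have hcalc : (n:ℝ) * (1/n) = 1 := by field_simp
        rw [heq]; rw [hcalc] at hpow; linarith
      have h2 : ((n:ℝ)+1)^(n+1) = ((n+1:ℝ)/n)^n * (n:ℝ)^n * ((n:ℝ)+1) := by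
        rw [div_pow]; field_simp; ring
      have h4 : (4:ℝ) ≤ (n:ℝ) + 1 := by
        have : (3:ℝ) ≤ n := by exact_mod_cast hn
        linarith
      have hkey : Real.exp 2 * (n:ℝ)^n ≤ ((n:ℝ)+1)^(n+1) := by
        rw [h2]
        have step1 : 2 * (n:ℝ)^n ≤ ((n+1:ℝ)/n)^n * (n:ℝ)^n :=
          mul_le_mul_of_nonneg_right hber (le_of_lt hnn)
        have step2 : ((n+1:ℝ)/n)^n * (n:ℝ)^n * 4 ≤ ((n+1:ℝ)/n)^n * (n:ℝ)^n * ((n:ℝ)+1) := by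
          apply mul_le_mul_of_nonneg_left h4
          positivity
        nlinarith
      push_cast
      calc Real.exp (2*(n:ℝ)) * Real.exp 2 ≤ (16 * (n:ℝ)^n) * Real.exp 2 := by
            have := ihn; push_cast at this; nlinarith
        _ ≤ 16 * ((n:ℝ)+1)^(n+1) := by nlinarith



lemma L2 (a b : ℕ) (ha : 1 ≤ a) (hb : 1 ≤ b) (hba : b ≤ a) :
    ((a : ℝ) + b) ^ (a + b) ≤ 16 * (a : ℝ) ^ (a + b) * (b : ℝ) ^ b := by
  have h0 : (0:ℝ) < a := by positivity
  have hsplit : ((a:ℝ) + b) ^ (a+b) = (1 + (b:ℝ)/a) ^ (a+b) * (a:ℝ)^(a+b) := by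
    have : (1 + (b:ℝ)/a) = ((a:ℝ)+b)/a := by field_simp
    rw [this, div_pow]; field_simp
  rw [hsplit]
  have hexp : (1 + (b:ℝ)/a) ^ (a+b) ≤ Real.exp ((a+b) * ((b:ℝ)/a)) := by
    calc (1 + (b:ℝ)/a) ^ (a+b) ≤ (Real.exp ((b:ℝ)/a)) ^ (a+b) := by
          apply pow_le_pow_left₀ (by positivity)
          have := Real.add_one_le_exp ((b:ℝ)/a)
          linarith
      _ = Real.exp ((a+b) * ((b:ℝ)/a)) := by
          rw [← Real.exp_nat_mul]; push_cast; ring_nf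
  have harg : ((a:ℕ)+b : ℝ) * ((b:ℝ)/a) ≤ 2 * b := by
    rw [div_eq_mul_inv]
    have hab : (a:ℝ) + b ≤ 2 * a := by
      have : (b:ℝ) ≤ a := by exact_mod_cast hba
      linarith
    have hbpos : (0:ℝ) ≤ (b:ℝ) := by positivity
    have hinv : (0:ℝ) < (a:ℝ)⁻¹ := by positivity
    calc ((a:ℝ)+b) * ((b:ℝ) * (a:ℝ)⁻¹) ≤ (2*a) * ((b:ℝ) * (a:ℝ)⁻¹) := by
          apply mul_le_mul_of_nonneg_right hab; positivity
      _ = 2 * b := by field_simp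
  have hmono : Real.exp (((a:ℕ)+b : ℝ) * ((b:ℝ)/a)) ≤ Real.exp (2*b) :=
    Real.exp_le_exp.mpr harg
  have h1 := L1 b hb
  have hpowpos : (0:ℝ) < (a:ℝ)^(a+b) := by positivity
  calc (1 + (b:ℝ)/a) ^ (a+b) * (a:ℝ)^(a+b)
      ≤ Real.exp (2*b) * (a:ℝ)^(a+b) := by
        apply mul_le_mul_of_nonneg_right _ (le_of_lt hpowpos)
        refine le_trans hexp ?_
        push_cast at hmono ⊢
        exact hmono
    _ ≤ (16 * (b:ℝ)^b) * (a:ℝ)^(a+b) := mul_le_mul_of_nonneg_right h1 (le_of_lt hpowpos)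
    _ = 16 * (a:ℝ)^(a+b) * (b:ℝ)^b := by ring


lemma LgoodCard (N a b : ℕ) (A B : Finset (Fin N)) (hAB : Disjoint A B) :
    (Fintype.piFinset (fun i : Fin N =>
      if i ∈ A then (univ.filter (fun x : Fin (a+b) => (x:ℕ) < a))
      else if i ∈ B then (univ.filter (fun x : Fin (a+b) => a ≤ (x:ℕ)))
      else univ)).card
    = a ^ A.card * b ^ B.card * (a+b) ^ (N - A.card - B.card) := by
  rw [Fintype.card_piFinset]
  have hfa : (univ.filter (fun x : Fin (a+b) => (x:ℕ) < a)).card = a := by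
    have : (univ.filter (fun x : Fin (a+b) => (x:ℕ) < a)) = (Finset.range a).attachFin
        (fun m hm => lt_of_lt_of_le (Finset.mem_range.mp hm) (Nat.le_add_right a b)) := by
      ext x; simp [Finset.mem_attachFin]
    rw [this, Finset.card_attachFin, Finset.card_range]
  have hfb : (univ.filter (fun x : Fin (a+b) => a ≤ (x:ℕ))).card = b := by
    have hc := Finset.card_filter_add_card_filter_not
      (s := (univ : Finset (Fin (a+b)))) (p := fun x : Fin (a+b) => (x:ℕ) < a)
    simp only [not_lt] at hc
    rw [hfa] at hc
    simp [Finset.card_univ] at hc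
    omega
  have hcard : ∀ i : Fin N,
      ((if i ∈ A then (univ.filter (fun x : Fin (a+b) => (x:ℕ) < a))
        else if i ∈ B then (univ.filter (fun x : Fin (a+b) => a ≤ (x:ℕ)))
        else univ).card)
      = if i ∈ A then a else if i ∈ B then b else (a+b) := by
    intro i
    split_ifs with h1 h2
    · exact hfa
    · exact hfb
    · simp [Finset.card_univ]
  calc ∏ i : Fin N, (if i ∈ A then (univ.filter (fun x : Fin (a+b) => (x:ℕ) < a))
        else if i ∈ B then (univ.filter (fun x : Fin (a+b) => a ≤ (x:ℕ)))
        else univ).card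
      = ∏ i : Fin N, (if i ∈ A then a else if i ∈ B then b else (a+b)) :=
        Finset.prod_congr rfl (fun i _ => hcard i)
    _ = a ^ A.card * b ^ B.card * (a+b) ^ (N - A.card - B.card) := by
        rw [← Finset.prod_sdiff (Finset.subset_univ (A ∪ B))]
        have h1 : ∏ i ∈ A ∪ B, (if i ∈ A then a else if i ∈ B then b else (a+b))
            = a ^ A.card * b ^ B.card := by
          rw [Finset.prod_union hAB]
          congr 1
          · rw [Finset.prod_congr rfl (fun i hi => by rw [if_pos hi]), Finset.prod_const]
          · rw [Finset.prod_congr rfl (fun i hi => by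
              rw [if_neg (Finset.disjoint_right.mp hAB hi), if_pos hi]), Finset.prod_const]
        have h2 : ∏ i ∈ univ \ (A ∪ B), (if i ∈ A then a else if i ∈ B then b else (a+b))
            = (a+b) ^ (N - A.card - B.card) := by
          rw [Finset.prod_congr rfl (fun i hi => by
            have hi' := Finset.mem_sdiff.mp hi
            rw [if_neg (fun h => hi'.2 (Finset.mem_union_left _ h)),
                if_neg (fun h => hi'.2 (Finset.mem_union_right _ h))]), Finset.prod_const]
          congr 1
          rw [Finset.card_sdiff_of_subset (Finset.subset_univ _), Finset.card_univ,
              Finset.card_union_of_disjoint hAB]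
          simp [Fintype.card_fin]
          omega
        rw [h1, h2]
        ring


lemma Lcnt (N a : ℕ) (hN : 1 ≤ N) :
    ((univ : Finset (Finset (Fin N))).filter (fun A => A.card ≤ a)).card ≤ (a+1) * N^a := by
  have hsub : ((univ : Finset (Finset (Fin N))).filter (fun A => A.card ≤ a))
      ⊆ (Finset.range (a+1)).biUnion (fun i => Finset.powersetCard i univ) := by
    intro A hA
    simp only [Finset.mem_filter, Finset.mem_univ, true_and] at hA
    simp only [Finset.mem_biUnion, Finset.mem_range, Finset.mem_powersetCard]
    exact ⟨A.card, by omega, Finset.subset_univ A, rfl⟩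
  calc ((univ : Finset (Finset (Fin N))).filter (fun A => A.card ≤ a)).card
      ≤ ((Finset.range (a+1)).biUnion (fun i => Finset.powersetCard i univ)).card :=
        Finset.card_le_card hsub
    _ ≤ ∑ i ∈ Finset.range (a+1), (Finset.powersetCard i (univ : Finset (Fin N))).card :=
        Finset.card_biUnion_le
    _ ≤ ∑ i ∈ Finset.range (a+1), N^a := by
        apply Finset.sum_le_sum
        intro i hi
        rw [Finset.card_powersetCard, Finset.card_univ, Fintype.card_fin]
        calc Nat.choose N i ≤ N ^ i := Nat.choose_le_pow N i
          _ ≤ N ^ a := Nat.pow_le_pow_right hN (by simpa using Nat.lt_succ_iff.mp (Finset.mem_range.mp hi))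
    _ = (a+1) * N^a := by rw [Finset.sum_const, Finset.card_range, smul_eq_mul]


-- pure ℕ lower bound
lemma Lglow (N a b a' b' : ℕ) (ha' : a' ≤ a) (hb' : b' ≤ b) (hab : a' + b' ≤ N) :
    a^a * b^b * (a+b)^N ≤ (a+b)^(a+b) * (a^a' * b^b' * (a+b)^(N - a' - b')) := by
  have h1 : a + b + (N - a' - b') = (a - a') + ((b - b') + N) := by omega
  have h2 : (a+b)^(a+b) * (a^a' * b^b' * (a+b)^(N - a' - b'))
      = (a^a' * (a+b)^(a-a')) * ((b^b' * (a+b)^(b-b')) * (a+b)^N) := by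
    rw [show (a^a' * (a+b)^(a-a')) * ((b^b' * (a+b)^(b-b')) * (a+b)^N)
        = a^a' * b^b' * ((a+b)^(a-a') * ((a+b)^(b-b') * (a+b)^N)) by ring,
      ← pow_add, ← pow_add, ← h1, pow_add]
    ring
  rw [h2]
  have ha : a^a = a^a' * a^(a-a') := by rw [← pow_add]; congr 1; omega
  have hb : b^b = b^b' * b^(b-b') := by rw [← pow_add]; congr 1; omega
  calc a^a * b^b * (a+b)^N = (a^a' * a^(a-a')) * ((b^b' * b^(b-b')) * (a+b)^N) := by
        rw [← ha, ← hb]; ring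
    _ ≤ (a^a' * (a+b)^(a-a')) * ((b^b' * (a+b)^(b-b')) * (a+b)^N) := by
        apply Nat.mul_le_mul
        · exact Nat.mul_le_mul_left _ (Nat.pow_le_pow_left (Nat.le_add_right a b) _)
        · exact Nat.mul_le_mul_right _ (Nat.mul_le_mul_left _
            (Nat.pow_le_pow_left (Nat.le_add_left b a) _))

/-- There is an absolute constant `c` such that for all `N ≥ 2` and
`a ≥ b ≥ 1` with `a ≥ 2` and `b ≤ a ≤ N`, there is an `(N, a, b)`-universal family `𝒢` of
subsets of `{1, …, N}` of size at most `c·a^(b+1)·⌈log N⌉`: for all disjoint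
`A, B ⊆ {1, …, N}` with `|A| ≤ a` and `|B| ≤ b` there is `S ∈ 𝒢` with `A ⊆ S` and
`B ∩ S = ∅`. -/
theorem stmt_5 :
    ∃ c : ℕ, ∀ N a b : ℕ, 2 ≤ N → 2 ≤ a → 1 ≤ b → b ≤ a → a ≤ N →
      ∃ 𝒢 : Finset (Finset (Fin N)),
        𝒢.card ≤ c * a ^ (b + 1) * Nat.clog 2 N ∧
        ∀ A B : Finset (Fin N), Disjoint A B → A.card ≤ a → B.card ≤ b →
          ∃ S ∈ 𝒢, A ⊆ S ∧ Disjoint B S := by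
  use 80
  intro N a b hN ha hb hba haN
  set L := Nat.clog 2 N with hLdef
  have hL : 1 ≤ L := by
    rw [hLdef]
    exact Nat.clog_pos one_lt_two hN
  set t := 80 * a ^ (b+1) * L with htdef
  set k := a + b with hkdef
  have hk : 1 ≤ k := by omega
  set D := k ^ N with hDdef
  -- the set of requirements
  set R : Finset (Finset (Fin N) × Finset (Fin N)) :=
    (univ : Finset (Finset (Fin N) × Finset (Fin N))).filter
      (fun p => Disjoint p.1 p.2 ∧ p.1.card ≤ a ∧ p.2.card ≤ b) with hRdef
  -- good sets of colourings
  set Good : Finset (Fin N) × Finset (Fin N) → Finset (Fin N → Fin k) :=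
    fun p => Fintype.piFinset (fun i : Fin N =>
      if i ∈ p.1 then (univ.filter (fun x : Fin k => (x:ℕ) < a))
      else if i ∈ p.2 then (univ.filter (fun x : Fin k => a ≤ (x:ℕ)))
      else univ) with hGooddef
  set Bad : Finset (Fin N) × Finset (Fin N) → Finset (Fin t → (Fin N → Fin k)) :=
    fun p => Fintype.piFinset (fun _ : Fin t => (Good p)ᶜ) with hBaddef
  -- cardinalities
  have hcardOmega : Fintype.card (Fin N → Fin k) = D := by
    simp [hDdef, Fintype.card_fun]
  have hGoodle : ∀ p, (Good p).card ≤ D := fun p => by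
    rw [← hcardOmega]; exact Finset.card_le_univ _
  have hGlow : ∀ p ∈ R, a^a * b^b * D ≤ k^k * (Good p).card := by
    intro p hp
    rw [hRdef, Finset.mem_filter] at hp
    obtain ⟨-, hdisj, hca, hcb⟩ := hp
    have hcard := LgoodCard N a b p.1 p.2 hdisj
    rw [hGooddef]
    have hle : p.1.card + p.2.card ≤ N := by
      have := Finset.card_union_of_disjoint hdisj
      have h2 : (p.1 ∪ p.2).card ≤ N := by
        simpa using Finset.card_le_univ (p.1 ∪ p.2)
      omega
    rw [hcard, hDdef, hkdef]
    exact Lglow N a b p.1.card p.2.card hca hcb hle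
  have hmBound : R.card ≤ N ^ (6*a) := by
    have hsub : R ⊆ ((univ : Finset (Finset (Fin N))).filter (fun A => A.card ≤ a)) ×ˢ
        ((univ : Finset (Finset (Fin N))).filter (fun B => B.card ≤ b)) := by
      intro p hp
      rw [hRdef, Finset.mem_filter] at hp
      simp only [Finset.mem_product, Finset.mem_filter, Finset.mem_univ, true_and]
      exact ⟨hp.2.2.1, hp.2.2.2⟩
    have h1 := Lcnt N a (by omega)
    have h2 := Lcnt N b (by omega)
    have hprod : R.card ≤ ((a+1) * N^a) * ((b+1) * N^b) := by
      calc R.card ≤ _ := Finset.card_le_card hsub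
        _ = _ * _ := Finset.card_product _ _
        _ ≤ ((a+1) * N^a) * ((b+1) * N^b) := Nat.mul_le_mul h1 h2
    have hA2 : a + 1 ≤ N^2 := by nlinarith
    have hB2 : b + 1 ≤ N^2 := by nlinarith
    calc R.card ≤ ((a+1) * N^a) * ((b+1) * N^b) := hprod
      _ ≤ (N^2 * N^a) * (N^2 * N^b) := Nat.mul_le_mul
          (Nat.mul_le_mul_right _ hA2) (Nat.mul_le_mul_right _ hB2)
      _ = N ^ (2 + a + (2 + b)) := by rw [← pow_add, ← pow_add, ← pow_add]
      _ ≤ N ^ (6*a) := Nat.pow_le_pow_right (by omega) (by omega)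
  -- real-number core inequality
  have hDpos : 0 < D := Nat.pow_pos (by omega)
  have hq : (0:ℝ) < (a:ℝ)^a * (b:ℝ)^b / (k:ℝ)^k := by
    have : (0:ℝ) < (k:ℝ)^k := by positivity
    have ha0 : (0:ℝ) < (a:ℝ)^a := by positivity
    have hb0 : (0:ℝ) < (b:ℝ)^b := by positivity
    positivity
  set q : ℝ := (a:ℝ)^a * (b:ℝ)^b / (k:ℝ)^k with hqdef
  have hkpos : (0:ℝ) < (k:ℝ)^k := by positivity
  have hq1 : q ≤ 1 := by
    rw [hqdef, div_le_one hkpos]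
    have h1 : (a:ℝ)^a ≤ (k:ℝ)^a := by
      apply pow_le_pow_left₀ (by positivity)
      exact_mod_cast Nat.le_add_right a b
    have h2 : (b:ℝ)^b ≤ (k:ℝ)^b := by
      apply pow_le_pow_left₀ (by positivity)
      exact_mod_cast Nat.le_add_left b a
    calc (a:ℝ)^a * (b:ℝ)^b ≤ (k:ℝ)^a * (k:ℝ)^b := by
          apply mul_le_mul h1 h2 (by positivity) (by positivity)
      _ = (k:ℝ)^k := by rw [← pow_add]
  -- q ≥ 1/(16 a^b)
  have hqlow : 1 / (16 * (a:ℝ)^b) ≤ q := by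
    have hL2 := L2 a b (by omega) hb hba
    have hkk : ((k:ℕ):ℝ)^k = ((a:ℝ)+b)^(a+b) := by
      rw [hkdef]; push_cast; ring_nf
    have h16 : ((k:ℝ))^k ≤ 16 * (a:ℝ)^(a+b) * (b:ℝ)^b := by
      rw [hkk]; exact hL2
    rw [hqdef, div_le_div_iff₀ (by positivity) hkpos]
    calc 1 * (k:ℝ)^k ≤ 16 * (a:ℝ)^(a+b) * (b:ℝ)^b := by rw [one_mul]; exact h16
      _ = (a:ℝ)^a * (b:ℝ)^b * (16 * (a:ℝ)^b) := by rw [pow_add]; ring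
  -- the first moment bound
  have hsum : ∑ p ∈ R, (Bad p).card < D ^ t := by
    have hqt : (6:ℝ) * a * L * Real.log 2 < q * t := by
      have hlog2 : Real.log 2 < 0.6931471808 := Real.log_two_lt_d9
      have hqt1 : (5:ℝ) * a * L ≤ q * t := by
        have ht : (t:ℝ) = 80 * (a:ℝ)^(b+1) * L := by rw [htdef]; push_cast; ring
        have hstep : 1 / (16 * (a:ℝ)^b) * t ≤ q * t := by
          apply mul_le_mul_of_nonneg_right hqlow (by positivity)
        have heq : 1 / (16 * (a:ℝ)^b) * t = 5 * a * L := by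
          rw [ht, pow_succ]
          field_simp
          ring
        rw [heq] at hstep; exact hstep
      have haL : (1:ℝ) ≤ (a:ℝ) * L := by
        have : (1:ℝ) ≤ (a:ℝ) := by exact_mod_cast (by omega : 1 ≤ a)
        have : (1:ℝ) ≤ (L:ℝ) := by exact_mod_cast hL
        nlinarith [(show (1:ℝ) ≤ (a:ℝ) by exact_mod_cast (by omega : 1 ≤ a))]
      have hlogpos : 0 < Real.log 2 := Real.log_pos (by norm_num)
      nlinarith
    -- each Bad p has card (D - g)^t ≤ (D(1-q))^t in ℝ
    have hBadcard : ∀ p, (Bad p).card = (D - (Good p).card) ^ t := by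
      intro p
      rw [hBaddef]
      simp only
      rw [Fintype.card_piFinset]
      rw [Finset.prod_const, Finset.card_compl, hcardOmega, Finset.card_univ,
        Fintype.card_fin]
    have hreal : ∀ p ∈ R, ((Bad p).card : ℝ) ≤ ((D:ℝ) * (1 - q)) ^ t := by
      intro p hp
      rw [hBadcard p]
      push_cast [Nat.cast_sub (hGoodle p)]
      apply pow_le_pow_left₀
      · have : ((Good p).card : ℝ) ≤ D := by exact_mod_cast hGoodle p
        linarith
      · have hg : q * D ≤ ((Good p).card : ℝ) := by
          have := hGlow p hp
          have hcast : ((a:ℝ)^a * (b:ℝ)^b) * (D:ℝ) ≤ (k:ℝ)^k * ((Good p).card : ℝ) := by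
            exact_mod_cast this
          rw [hqdef, div_mul_eq_mul_div, div_le_iff₀ hkpos]
          linarith [hcast]
        have hD0 : (0:ℝ) ≤ D := by positivity
        nlinarith
    have hchain : (∑ p ∈ R, ((Bad p).card:ℝ)) < (D:ℝ)^t := by
      calc (∑ p ∈ R, ((Bad p).card:ℝ)) ≤ ∑ p ∈ R, ((D:ℝ) * (1 - q)) ^ t :=
            Finset.sum_le_sum hreal
        _ = R.card * ((D:ℝ) * (1 - q)) ^ t := by rw [Finset.sum_const, nsmul_eq_mul]
        _ = R.card * (1 - q) ^ t * (D:ℝ)^t := by rw [mul_pow]; ring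
        _ < 1 * (D:ℝ)^t := by
            apply mul_lt_mul_of_pos_right _ (by positivity)
            -- R.card * (1-q)^t < 1
            have hm : (R.card : ℝ) ≤ Real.exp (6 * a * L * Real.log 2) := by
              have h1 : (R.card : ℝ) ≤ (N:ℝ)^(6*a) := by exact_mod_cast hmBound
              have h2 : (N:ℝ) ≤ (2:ℝ)^L := by
                exact_mod_cast Nat.le_pow_clog one_lt_two N
              have h3 : (N:ℝ)^(6*a) ≤ ((2:ℝ)^L)^(6*a) :=
                pow_le_pow_left₀ (by positivity) h2 _
              have h4 : ((2:ℝ)^L)^(6*a) = Real.exp (6 * a * L * Real.log 2) := by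
                rw [← pow_mul]
                have h5 : Real.exp (((L*(6*a) : ℕ) : ℝ) * Real.log 2) = ((2:ℝ))^(L*(6*a)) := by
                  rw [Real.exp_nat_mul, Real.exp_log (by norm_num)]
                rw [← h5]
                congr 1
                push_cast; ring
              calc (R.card:ℝ) ≤ (N:ℝ)^(6*a) := h1
                _ ≤ _ := h3
                _ = _ := by rw [h4]
            have hexpq : (1 - q)^t ≤ Real.exp (-(q * t)) := by
              have h1 : 1 - q ≤ Real.exp (-q) := by
                have := Real.add_one_le_exp (-q)
                linarith
              calc (1-q)^t ≤ (Real.exp (-q))^t :=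
                    pow_le_pow_left₀ (by linarith) h1 t
                _ = Real.exp (-(q*t)) := by
                    rw [← Real.exp_nat_mul]; congr 1; ring
            calc (R.card : ℝ) * (1-q)^t
                ≤ Real.exp (6 * a * L * Real.log 2) * Real.exp (-(q*t)) := by
                  apply mul_le_mul hm hexpq (pow_nonneg (by linarith) t) (by positivity)
              _ = Real.exp (6 * a * L * Real.log 2 - q*t) := by
                  rw [← Real.exp_add]; ring_nf
              _ < 1 := by
                  rw [Real.exp_lt_one_iff]
                  linarith
        _ = (D:ℝ)^t := by ring
    have : ((∑ p ∈ R, (Bad p).card : ℕ) : ℝ) < ((D^t : ℕ) : ℝ) := by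
      push_cast
      exact hchain
    exact_mod_cast this
  -- extract a witness colouring tuple
  have hbiUnion : (R.biUnion Bad).card < Fintype.card (Fin t → (Fin N → Fin k)) := by
    have h1 : (R.biUnion Bad).card ≤ ∑ p ∈ R, (Bad p).card := Finset.card_biUnion_le
    have h2 : Fintype.card (Fin t → (Fin N → Fin k)) = D ^ t := by
      rw [Fintype.card_fun, hcardOmega, Fintype.card_fin]
    omega
  obtain ⟨F, hF⟩ : ∃ F : Fin t → (Fin N → Fin k), F ∉ R.biUnion Bad := by
    by_contra h
    push_neg at h
    have : (univ : Finset (Fin t → (Fin N → Fin k))) ⊆ R.biUnion Bad :=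
      fun F _ => h F
    have := Finset.card_le_card this
    rw [Finset.card_univ] at this
    omega
  -- build the family
  refine ⟨Finset.image (fun j : Fin t => univ.filter (fun i : Fin N => ((F j i : ℕ) < a))) univ,
    ?_, ?_⟩
  · calc _ ≤ (univ : Finset (Fin t)).card := Finset.card_image_le
      _ = t := by simp
      _ = 80 * a^(b+1) * L := htdef
  · intro A B hdisj hcA hcB
    have hpR : (A, B) ∈ R := by
      rw [hRdef, Finset.mem_filter]
      exact ⟨Finset.mem_univ _, hdisj, hcA, hcB⟩
    have hnotBad : F ∉ Bad (A, B) := by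
      intro hbad
      exact hF (Finset.mem_biUnion.mpr ⟨(A,B), hpR, hbad⟩)
    have hexj : ∃ j, F j ∈ Good (A, B) := by
      by_contra h
      push_neg at h
      apply hnotBad
      rw [hBaddef]
      rw [Fintype.mem_piFinset]
      intro j
      rw [Finset.mem_compl]
      exact h j
    obtain ⟨j, hj⟩ := hexj
    refine ⟨univ.filter (fun i : Fin N => ((F j i : ℕ) < a)), Finset.mem_image_of_mem _ (Finset.mem_univ j), ?_, ?_⟩
    · intro i hi
      rw [hGooddef, Fintype.mem_piFinset] at hj
      have := hj i
      rw [if_pos hi] at this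
      simp only [Finset.mem_filter, Finset.mem_univ, true_and] at this ⊢
      exact this
    · rw [Finset.disjoint_right]
      intro i hiS hiB
      rw [hGooddef, Fintype.mem_piFinset] at hj
      have := hj i
      rw [if_neg (Finset.disjoint_right.mp hdisj hiB), if_pos hiB] at this
      simp only [Finset.mem_filter, Finset.mem_univ, true_and] at this hiS
      omega
end

section
/- Let k ≥ 1 be an integer, let X be a finite set, and let 𝓗 be a nonempty finite family of functions from X to a set Y of size 2k². Suppose that 𝓗 is 0.1-almost pairwise independent in the following counting sense: for every x₁ ≠ x₂ in X and every y₁, y₂ ∈ Y, the number of functions h ∈ 𝓗 with h(x₁) = y₁ and h(x₂) = y₂ is at most (1.1/(4k⁴))·|𝓗|. Then for every subset S ⊆ X with |S| ≤ k, there exists a function h ∈ 𝓗 that is injective on S. -/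
/-!
Union bound. A function of `𝓗` fails to be injective on `S` only if it collides on one of the
fewer than `k²` ordered pairs of distinct points of `S`, and for a fixed pair the collisions
split over the `2k²` common values, each taken by at most a `1.1/(4k⁴)` fraction of `𝓗`.
So at most a `k² · 2k² · 1.1/(4k⁴) = 0.55` fraction of `𝓗` is non-injective on `S`.
-/

open Finset

section Collisions

variable {X Y : Type*} [DecidableEq Y] (𝓗 : Finset (X → Y))

theorem card_filter_apply_eq_apply [Fintype Y] (a b : X) :
    #{h ∈ 𝓗 | h a = h b} = ∑ y, #{h ∈ 𝓗 | h a = y ∧ h b = y} := by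
  rw [card_eq_sum_card_fiberwise (f := fun h => h a) (t := univ) fun _ _ => mem_univ _]
  refine sum_congr rfl fun y _ => congrArg card ?_
  ext h
  simp only [mem_filter]
  constructor
  · rintro ⟨⟨hh, hab⟩, rfl⟩
    exact ⟨hh, rfl, hab.symm⟩
  · rintro ⟨hh, rfl, hb⟩
    exact ⟨⟨hh, hb.symm⟩, rfl⟩

theorem exists_injOn_of_sum_card_collisions_lt [DecidableEq X] (S : Finset X)
    (hlt : ∑ p ∈ S.offDiag, #{h ∈ 𝓗 | h p.1 = h p.2} < #𝓗) :
    ∃ h ∈ 𝓗, Set.InjOn h S := by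
  classical
  by_contra! hnot
  have hcover : 𝓗 ⊆ S.offDiag.biUnion fun p => {h ∈ 𝓗 | h p.1 = h p.2} := by
    intro h hh
    have hnotInj := hnot h hh
    simp only [Set.InjOn, not_forall] at hnotInj
    obtain ⟨a, ha, b, hb, hab, hne⟩ := hnotInj
    exact mem_biUnion.mpr ⟨(a, b), mem_offDiag.mpr ⟨ha, hb, hne⟩, mem_filter.mpr ⟨hh, hab⟩⟩
  exact (card_le_card hcover |>.trans card_biUnion_le).not_gt hlt

theorem exists_injOn_of_card_filter_apply_le [Fintype Y] [DecidableEq X] (c : ℝ)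
    (hc : ∀ a b : X, a ≠ b → ∀ y₁ y₂ : Y, (#{h ∈ 𝓗 | h a = y₁ ∧ h b = y₂} : ℝ) ≤ c)
    (S : Finset X) (hlt : (#S.offDiag * Fintype.card Y : ℝ) * c < #𝓗) :
    ∃ h ∈ 𝓗, Set.InjOn h S := by
  refine exists_injOn_of_sum_card_collisions_lt 𝓗 S ?_
  have hpair : ∀ p ∈ S.offDiag, (#{h ∈ 𝓗 | h p.1 = h p.2} : ℝ) ≤ Fintype.card Y * c := by
    intro p hp
    rw [card_filter_apply_eq_apply, Nat.cast_sum, ← nsmul_eq_mul, ← card_univ, ← sum_const]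
    exact sum_le_sum fun y _ => hc _ _ (mem_offDiag.mp hp).2.2 y y
  have := (sum_le_sum hpair).trans_lt (by rwa [sum_const, nsmul_eq_mul, ← mul_assoc])
  exact_mod_cast this

end Collisions

theorem card_offDiag_le_sq {X : Type*} [DecidableEq X] (S : Finset X) :
    #S.offDiag ≤ #S ^ 2 := by
  rw [offDiag_card, sq]
  exact Nat.sub_le _ _

/-- Let `k ≥ 1`, `X` a finite set, and `𝓗` a nonempty finite family of
functions from `X` to a set `Y` of size `2k²` that is `0.1`-almost pairwise independent in
the counting sense: for all `x₁ ≠ x₂` and all `y₁, y₂`, the number of `h ∈ 𝓗` with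
`h x₁ = y₁` and `h x₂ = y₂` is at most `(1.1/(4k⁴))·|𝓗|`. Then for every `S ⊆ X` with
`|S| ≤ k` there is some `h ∈ 𝓗` injective on `S`. -/
theorem stmt_7 {X Y : Type} [Fintype X] [Fintype Y] [DecidableEq X] [DecidableEq Y]
    (k : ℕ) (hk : 1 ≤ k) (hY : Fintype.card Y = 2 * k ^ 2)
    (𝓗 : Finset (X → Y)) (hne : 𝓗.Nonempty)
    (hapi : ∀ x₁ x₂ : X, x₁ ≠ x₂ → ∀ y₁ y₂ : Y,
      ((𝓗.filter fun h => h x₁ = y₁ ∧ h x₂ = y₂).card : ℝ) ≤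
        (1.1 / (4 * (k : ℝ) ^ 4)) * 𝓗.card) :
    ∀ S : Finset X, S.card ≤ k → ∃ h ∈ 𝓗, Set.InjOn h ↑S := by
  intro S hS
  refine exists_injOn_of_card_filter_apply_le 𝓗 _ hapi S ?_
  have hk0 : (0 : ℝ) < k := by exact_mod_cast hk
  have hH : (0 : ℝ) < #𝓗 := by exact_mod_cast hne.card_pos
  have hpairs : (#S.offDiag : ℝ) ≤ (k : ℝ) ^ 2 := by
    exact_mod_cast (card_offDiag_le_sq S).trans (Nat.pow_le_pow_left hS 2)
  calc (#S.offDiag * Fintype.card Y : ℝ) * (1.1 / (4 * (k : ℝ) ^ 4) * #𝓗)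
      ≤ ((k : ℝ) ^ 2 * (2 * (k : ℝ) ^ 2)) * (1.1 / (4 * (k : ℝ) ^ 4) * #𝓗) := by
        rw [hY]; push_cast; gcongr
    _ = 0.55 * (#𝓗 : ℝ) := by field_simp; ring
    _ < #𝓗 := by linarith
end

section
/- There is an absolute constant c such that for all integers n ≥ 2 and 1 ≤ k ≤ n, there exists a family 𝓗 of functions from {1, …, n} to {1, …, 2k²} of cardinality at most (k·⌈log n⌉)^c that is (n, k)-perfect: for every subset S ⊆ {1, …, n} with |S| ≤ k, there exists a function h ∈ 𝓗 that is injective on S. -/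
open Finset

lemma pair_filter_card {n m : ℕ} {x y : Fin n} (hxy : x ≠ y) :
    ((univ : Finset (Fin n → Fin m)).filter fun f => f x = f y).card ≤ m ^ (n - 1) := by
  classical
  have hcard : Fintype.card {z : Fin n // z ≠ y} = n - 1 := by
    simp [Fintype.card_subtype_compl]
  have htarget : ((univ : Finset ({z : Fin n // z ≠ y} → Fin m))).card = m ^ (n - 1) := by
    rw [card_univ, Fintype.card_fun, hcard, Fintype.card_fin]
  rw [← htarget]
  apply Finset.card_le_card_of_injOn (fun f => fun z => f z.1)
  · intro f _; exact mem_univ _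
  · intro f hf g hg hfg
    simp only [coe_filter, Set.mem_setOf_eq, mem_univ, true_and] at hf hg
    have hx : f x = g x := by have := congrFun hfg ⟨x, hxy⟩; simpa using this
    funext z
    by_cases hz : z = y
    · rw [hz, ← hf, ← hg]; exact hx
    · have := congrFun hfg ⟨z, hz⟩; simpa using this

lemma bad_card {n k : ℕ} (hn : 1 ≤ n) (hk : 1 ≤ k) (S : Finset (Fin n)) (hS : S.card ≤ k)
    (B : Finset (Fin n → Fin (2 * k ^ 2))) (hB : ∀ f ∈ B, ¬ Set.InjOn f ↑S) :
    2 * B.card ≤ (2 * k ^ 2) ^ n := by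
  classical
  have hsub : B ⊆
      S.offDiag.biUnion (fun p => univ.filter fun f : Fin n → Fin (2 * k ^ 2) =>
        f p.1 = f p.2) := by
    intro f hf
    have hf' := hB f hf
    rw [Set.InjOn] at hf'
    push_neg at hf'
    obtain ⟨x, hx, y, hy, hfxy, hxy⟩ := hf'
    exact mem_biUnion.2 ⟨(x, y), mem_offDiag.2 ⟨hx, hy, hxy⟩, by
      simp [hfxy]⟩
  have h0 := card_le_card hsub
  have hb := card_biUnion_le (s := S.offDiag)
    (t := fun p => univ.filter fun f : Fin n → Fin (2 * k ^ 2) => f p.1 = f p.2)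
  have hsum : ∑ p ∈ S.offDiag, (univ.filter fun f : Fin n → Fin (2 * k ^ 2) =>
      f p.1 = f p.2).card ≤ S.offDiag.card * (2 * k ^ 2) ^ (n - 1) := by
    have := Finset.sum_le_sum (s := S.offDiag)
      (g := fun _p => (2 * k ^ 2) ^ (n - 1))
      (fun p hp => pair_filter_card (m := 2 * k ^ 2) (mem_offDiag.1 hp).2.2)
    simpa [Finset.sum_const, smul_eq_mul] using this
  have h1 : B.card ≤ S.offDiag.card * (2 * k ^ 2) ^ (n - 1) :=
    le_trans h0 (le_trans hb hsum)
  have h2 : 2 * S.offDiag.card ≤ 2 * k ^ 2 := by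
    rw [Finset.offDiag_card]
    have : S.card * S.card - S.card ≤ k * k := le_trans (Nat.sub_le _ _)
      (Nat.mul_le_mul hS hS)
    nlinarith [this]
  calc 2 * B.card
      ≤ 2 * (S.offDiag.card * (2 * k ^ 2) ^ (n - 1)) := Nat.mul_le_mul_left _ h1
    _ = (2 * S.offDiag.card) * (2 * k ^ 2) ^ (n - 1) := by ring
    _ ≤ (2 * k ^ 2) * (2 * k ^ 2) ^ (n - 1) := Nat.mul_le_mul_right _ h2
    _ = (2 * k ^ 2) ^ (n - 1 + 1) := (pow_succ' _ _).symm
    _ = (2 * k ^ 2) ^ n := by rw [Nat.sub_add_cancel hn]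

/-- There is an absolute constant `c` such that for all `n ≥ 2` and
`1 ≤ k ≤ n` there is an `(n, k)`-perfect family `𝓗` of functions from `{1, …, n}` to
`{1, …, 2k²}` of size at most `(k·⌈log n⌉)^c`: for every `S ⊆ {1, …, n}` with `|S| ≤ k`
some `h ∈ 𝓗` is injective on `S`. -/
theorem stmt_8 :
    ∃ c : ℕ, ∀ n k : ℕ, 2 ≤ n → 1 ≤ k → k ≤ n →
      ∃ 𝓗 : Finset (Fin n → Fin (2 * k ^ 2)),
        𝓗.card ≤ (k * Nat.clog 2 n) ^ c ∧
        ∀ S : Finset (Fin n), S.card ≤ k → ∃ h ∈ 𝓗, Set.InjOn h ↑S := by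
  classical
  refine ⟨10, ?_⟩
  intro n k hn hk hkn
  have hm2 : 2 ≤ 2 * k ^ 2 := by nlinarith
  have hL : 1 ≤ Nat.clog 2 n := Nat.clog_pos one_lt_two hn
  by_cases hk1 : k = 1
  · subst hk1
    refine ⟨{fun _ => ⟨0, by norm_num⟩}, ?_, ?_⟩
    · rw [card_singleton]
      exact Nat.one_le_pow _ _ (by omega)
    · intro S hS
      refine ⟨_, mem_singleton_self _, ?_⟩
      have : (S : Set (Fin n)).Subsingleton := by
        intro a ha b hb
        exact Finset.card_le_one.1 hS a ha b hb
      exact this.injOn _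
  · have hk2 : 2 ≤ k := by omega
    set m := 2 * k ^ 2 with hm
    set L := Nat.clog 2 n with hLdef
    set T := 2 * k * L + 1 with hT
    set Bad : Finset (Fin n) → Finset (Fin n → Fin m) :=
      fun S => univ.filter (fun f => ¬ Set.InjOn f ↑S) with hBad
    set 𝒮 : Finset (Finset (Fin n)) := univ.filter (fun S => S.card ≤ k) with h𝒮
    -- count of S
    have hScount : 𝒮.card < 2 ^ T := by
      have hsub : 𝒮 ⊆ (Finset.range (k + 1)).biUnion
          (fun j => Finset.powersetCard j univ) := by
        intro S hS
        simp only [h𝒮, mem_filter, mem_univ, true_and] at hS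
        exact mem_biUnion.2 ⟨S.card, Finset.mem_range.2 (by omega),
          Finset.mem_powersetCard.2 ⟨subset_univ _, rfl⟩⟩
      have h1 : 𝒮.card ≤ (k + 1) * n ^ k := by
        calc 𝒮.card ≤ _ := card_le_card hsub
          _ ≤ ∑ j ∈ Finset.range (k + 1), (Finset.powersetCard j (univ : Finset (Fin n))).card :=
            card_biUnion_le
          _ ≤ ∑ _j ∈ Finset.range (k + 1), n ^ k := by
            apply Finset.sum_le_sum
            intro j hj
            rw [Finset.card_powersetCard, card_univ, Fintype.card_fin]
            calc n.choose j ≤ n ^ j := Nat.choose_le_pow _ _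
              _ ≤ n ^ k := Nat.pow_le_pow_right (by omega) (by
                  exact Nat.lt_succ_iff.1 (Finset.mem_range.1 hj))
          _ = (k + 1) * n ^ k := by rw [Finset.sum_const, Finset.card_range, smul_eq_mul]
      have hn2 : n ≤ 2 ^ L := Nat.le_pow_clog one_lt_two n
      have h2 : (k + 1) * n ^ k ≤ 2 ^ (k * L) * 2 ^ (k * L) := by
        apply Nat.mul_le_mul
        · calc k + 1 ≤ 2 ^ k := Nat.succ_le_of_lt ((Nat.lt_two_pow_self (n := k)))
            _ ≤ 2 ^ (k * L) := Nat.pow_le_pow_right (by omega) (by nlinarith)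
        · calc n ^ k ≤ (2 ^ L) ^ k := Nat.pow_le_pow_left hn2 k
            _ = 2 ^ (k * L) := by rw [← pow_mul, mul_comm]
      calc 𝒮.card ≤ (k + 1) * n ^ k := h1
        _ ≤ 2 ^ (k * L) * 2 ^ (k * L) := h2
        _ = 2 ^ (2 * k * L) := by rw [← pow_add]; ring_nf
        _ < 2 ^ T := Nat.pow_lt_pow_right one_lt_two (by omega)
    -- existence of good tuple
    have hgood : ∃ g : Fin T → (Fin n → Fin m), ∀ S ∈ 𝒮, ∃ i, g i ∉ Bad S := by
      by_contra hcon
      push_neg at hcon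
      have hsub : (univ : Finset (Fin T → (Fin n → Fin m))) ⊆
          𝒮.biUnion (fun S => Fintype.piFinset (fun _ : Fin T => Bad S)) := by
        intro g _
        obtain ⟨S, hS, hall⟩ := hcon g
        exact mem_biUnion.2 ⟨S, hS, Fintype.mem_piFinset.2 hall⟩
      have hcardU : (univ : Finset (Fin T → (Fin n → Fin m))).card = (m ^ n) ^ T := by
        rw [card_univ, Fintype.card_fun, Fintype.card_fun]
        simp
      have hmain : (m ^ n) ^ T ≤ ∑ S ∈ 𝒮, (Bad S).card ^ T := by
        calc (m ^ n) ^ T = _ := hcardU.symm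
          _ ≤ (𝒮.biUnion (fun S => Fintype.piFinset (fun _ : Fin T => Bad S))).card :=
            card_le_card hsub
          _ ≤ ∑ S ∈ 𝒮, (Fintype.piFinset (fun _ : Fin T => Bad S)).card := card_biUnion_le
          _ = ∑ S ∈ 𝒮, (Bad S).card ^ T := by
            apply Finset.sum_congr rfl
            intro S _
            exact Fintype.card_piFinset_const _ _
      have hpos : 0 < (m ^ n) ^ T := by positivity
      have hfinal : 2 ^ T * (m ^ n) ^ T < 2 ^ T * (m ^ n) ^ T := by
        calc 2 ^ T * (m ^ n) ^ T ≤ 2 ^ T * ∑ S ∈ 𝒮, (Bad S).card ^ T :=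
            Nat.mul_le_mul_left _ hmain
          _ = ∑ S ∈ 𝒮, (2 * (Bad S).card) ^ T := by
            rw [Finset.mul_sum]
            apply Finset.sum_congr rfl
            intro S _
            rw [mul_pow]
          _ ≤ ∑ _S ∈ 𝒮, (m ^ n) ^ T := by
            apply Finset.sum_le_sum
            intro S hS
            apply Nat.pow_le_pow_left
            exact bad_card (by omega) hk S ((mem_filter.1 hS).2) (Bad S)
              (fun f hf => (mem_filter.1 hf).2)
          _ = 𝒮.card * (m ^ n) ^ T := by rw [Finset.sum_const, smul_eq_mul]
          _ < 2 ^ T * (m ^ n) ^ T := by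
            exact mul_lt_mul_of_pos_right hScount hpos
      exact absurd hfinal (lt_irrefl _)
    obtain ⟨g, hg⟩ := hgood
    refine ⟨Finset.image g univ, ?_, ?_⟩
    · calc (Finset.image g univ).card ≤ (univ : Finset (Fin T)).card := card_image_le
        _ = T := by rw [card_univ, Fintype.card_fin]
        _ ≤ (k * L) ^ 10 := by
          have hK : 2 ≤ k * L := by nlinarith
          have h4 : 4 * (k * L) ≤ (k * L) * (k * L) * (k * L) :=
            Nat.mul_le_mul (Nat.mul_le_mul hK hK) (le_refl (k * L))
          calc T = 2 * (k * L) + 1 := by rw [hT]; ring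
            _ ≤ 4 * (k * L) := by omega
            _ ≤ (k * L) * (k * L) * (k * L) := h4
            _ = (k * L) ^ 3 := by ring
            _ ≤ (k * L) ^ 10 := Nat.pow_le_pow_right (by omega) (by omega)
    · intro S hS
      have hSmem : S ∈ 𝒮 := by simp [h𝒮, hS]
      obtain ⟨i, hi⟩ := hg S hSmem
      refine ⟨g i, Finset.mem_image.2 ⟨i, mem_univ _, rfl⟩, ?_⟩
      simp only [hBad, mem_filter, mem_univ, true_and, not_not] at hi
      exact hi
end

section
/- Let N, M, a, b be positive integers and let 𝓗 be a finite family of functions from {1, …, N} to {1, …, M} such that for every subset S ⊆ {1, …, N} with |S| ≤ a + b there exists h ∈ 𝓗 injective on S. Define the family 𝒮 = { h⁻¹({1,…,M} ∖ I) : h ∈ 𝓗, I ⊆ {1,…,M}, |I| ≤ b } of subsets of {1, …, N}. Then |𝒮| ≤ |𝓗|·(M+1)^b, and for every pair of disjoint subsets A, B ⊆ {1, …, N} with |A| ≤ a and |B| ≤ b, there exists a set S ∈ 𝒮 satisfying A ⊆ S and B ∩ S = ∅. -/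
/-!
Given disjoint `A, B`, pick `h ∈ 𝓗` injective on `A ∪ B` and remove `I = h(B)`: the preimage
`h⁻¹([M] ∖ I)` misses `B` by construction and contains `A` because `h` does not identify a point
of `A` with one of `B`. For the count, there are `∑_{i ≤ b} C(M, i) ≤ ∑_{i ≤ b} C(b, i) M^i
= (M + 1)^b` choices of `I`.
-/

open Finset

theorem Finset.card_filter_powerset_card_le_le_succ_pow {α : Type*} (s : Finset α) (b : ℕ) :
    #{I ∈ s.powerset | #I ≤ b} ≤ (#s + 1) ^ b := by
  classical
  have hsub : {I ∈ s.powerset | #I ≤ b} ⊆ (range (b + 1)).biUnion (powersetCard · s) := by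
    intro I hI
    rw [mem_filter, mem_powerset] at hI
    exact mem_biUnion.2 ⟨#I, mem_range.2 (Nat.lt_succ_of_le hI.2), mem_powersetCard.2 ⟨hI.1, rfl⟩⟩
  calc #{I ∈ s.powerset | #I ≤ b}
      ≤ ∑ i ∈ range (b + 1), #(powersetCard i s) := (card_le_card hsub).trans card_biUnion_le
    _ ≤ ∑ i ∈ range (b + 1), #s ^ i * 1 ^ (b - i) * b.choose i := by
      gcongr with i hi
      rw [card_powersetCard, one_pow, mul_one]
      exact (Nat.choose_le_pow _ _).trans
        (Nat.le_mul_of_pos_right _ (Nat.choose_pos (Nat.lt_succ_iff.1 (mem_range.1 hi))))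
    _ = (#s + 1) ^ b := (add_pow _ _ _).symm

section PreimageComplImage

variable {α β : Type*} [Fintype α] [DecidableEq β] (h : α → β) {A B : Finset α}

theorem disjoint_filter_notMem_image : Disjoint B ({x | h x ∉ B.image h} : Finset α) :=
  disjoint_left.2 fun _ hx hx' => (mem_filter.1 hx').2 (mem_image_of_mem h hx)

theorem subset_filter_notMem_image_of_injOn [DecidableEq α] (hAB : Disjoint A B)
    (hinj : Set.InjOn h ↑(A ∪ B)) : A ⊆ ({x | h x ∉ B.image h} : Finset α) := by
  intro x hx
  rw [mem_filter, mem_image]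
  refine ⟨mem_univ x, fun ⟨y, hy, hyx⟩ => disjoint_left.1 hAB hx ?_⟩
  rwa [← hinj (by simp [hy]) (by simp [hx]) hyx]

end PreimageComplImage

theorem stmt_9_general (N M a b : ℕ)
    (𝓗 : Finset (Fin N → Fin M))
    (hperf : ∀ S : Finset (Fin N), S.card ≤ a + b → ∃ h ∈ 𝓗, Set.InjOn h ↑S)
    (𝒮 : Finset (Finset (Fin N)))
    (h𝒮 : 𝒮 = Finset.image
        (fun p : (Fin N → Fin M) × Finset (Fin M) =>
          Finset.univ.filter fun x => p.1 x ∉ p.2)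
        (𝓗 ×ˢ (Finset.univ : Finset (Fin M)).powerset.filter fun I => I.card ≤ b)) :
    𝒮.card ≤ 𝓗.card * (M + 1) ^ b ∧
      ∀ A B : Finset (Fin N), Disjoint A B → A.card ≤ a → B.card ≤ b →
        ∃ S ∈ 𝒮, A ⊆ S ∧ Disjoint B S := by
  subst h𝒮
  refine ⟨?_, fun A B hAB hA hB => ?_⟩
  · calc _ ≤ #(𝓗 ×ˢ {I ∈ (univ : Finset (Fin M)).powerset | #I ≤ b}) := card_image_le
      _ ≤ #𝓗 * (M + 1) ^ b := by
        rw [card_product]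
        gcongr
        simpa using card_filter_powerset_card_le_le_succ_pow (univ : Finset (Fin M)) b
  · obtain ⟨h, h𝓗, hinj⟩ := hperf (A ∪ B) ((card_union_le A B).trans (add_le_add hA hB))
    have hI : B.image h ∈ {I ∈ (univ : Finset (Fin M)).powerset | #I ≤ b} :=
      mem_filter.2 ⟨mem_powerset.2 (subset_univ _), card_image_le.trans hB⟩
    exact ⟨_, mem_image.2 ⟨(h, B.image h), mem_product.2 ⟨h𝓗, hI⟩, rfl⟩,
      subset_filter_notMem_image_of_injOn h hAB hinj, disjoint_filter_notMem_image h⟩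

/-- Let `𝓗` be a family of functions from `{1, …, N}` to `{1, …, M}` such
that every set of at most `a + b` elements is shattered injectively by some `h ∈ 𝓗`.
The family `𝒮 = { h⁻¹([M] ∖ I) : h ∈ 𝓗, |I| ≤ b }` has size at most `|𝓗|·(M+1)^b` and is
`(N, a, b)`-universal: for all disjoint `A, B` with `|A| ≤ a`, `|B| ≤ b` there is `S ∈ 𝒮`
with `A ⊆ S` and `B ∩ S = ∅`. -/
theorem stmt_9 (N M a b : ℕ) (hN : 0 < N) (hM : 0 < M) (ha : 0 < a) (hb : 0 < b)
    (𝓗 : Finset (Fin N → Fin M))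
    (hperf : ∀ S : Finset (Fin N), S.card ≤ a + b → ∃ h ∈ 𝓗, Set.InjOn h ↑S)
    (𝒮 : Finset (Finset (Fin N)))
    (h𝒮 : 𝒮 = Finset.image
        (fun p : (Fin N → Fin M) × Finset (Fin M) =>
          Finset.univ.filter fun x => p.1 x ∉ p.2)
        (𝓗 ×ˢ (Finset.univ : Finset (Fin M)).powerset.filter fun I => I.card ≤ b)) :
    𝒮.card ≤ 𝓗.card * (M + 1) ^ b ∧
      ∀ A B : Finset (Fin N), Disjoint A B → A.card ≤ a → B.card ≤ b →
        ∃ S ∈ 𝒮, A ⊆ S ∧ Disjoint B S :=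
  stmt_9_general N M a b 𝓗 hperf 𝒮 h𝒮
end

section
/- Let G be a connected finite simple graph with diameter at most D, let λ ≥ 2 be an integer, and let e = {u, v} be an edge of G such that u and v are λ-edge connected in G (for every set F′ of edges with |F′| ≤ λ − 1, u and v are connected in G − F′). Then for every set F of edges of G with e ∉ F and |F| ≤ λ − 2, the graph G − F contains a cycle through the edge e of length at most λ·(2D + 1) + 1. -/
open SimpleGraph

/-- If `w ≠ v` and `w` is reachable to `v`, there is a neighbor one step closer to `v`. -/
private lemma stmt10_step {V : Type} {H : SimpleGraph V} {w v : V}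
    (hr : H.Reachable w v) (hne : w ≠ v) :
    ∃ x, H.Adj w x ∧ H.dist x v + 1 = H.dist w v ∧ H.Reachable x v := by
  obtain ⟨p, hp⟩ := hr.exists_walk_length_eq_dist
  have hd : 0 < H.dist w v := hr.pos_dist_of_ne hne
  have hnil : ¬ p.Nil := by rw [SimpleGraph.Walk.nil_iff_length_eq]; omega
  refine ⟨p.snd, p.adj_snd hnil, ?_, p.tail.reachable⟩
  have htl : p.tail.length + 1 = p.length := SimpleGraph.Walk.length_tail_add_one hnil
  have h1 : H.dist p.snd v ≤ p.tail.length := SimpleGraph.dist_le _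
  obtain ⟨q, hq⟩ := (p.tail.reachable).exists_walk_length_eq_dist
  have h2 : H.dist w v ≤ q.length + 1 := by
    have := SimpleGraph.dist_le (SimpleGraph.Walk.cons (p.adj_snd hnil) q)
    simpa using this
  omega

/-- Key quantitative lemma (pairwise Chung–Garey type bound):
if `u` and `v` are still connected after deleting the edges of `F'` from a connected
graph `G` all of whose distances are at most `D`, then their distance in the new graph
is at most `D + |F'| * (2D+1)`. -/
private lemma stmt10_bound {V : Type} [Fintype V] {G : SimpleGraph V} {D : ℕ}
    (hconn : G.Connected) (hdiam : ∀ a b : V, G.dist a b ≤ D)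
    (F' : Finset (Sym2 V)) {u v : V}
    (hreach : (G.deleteEdges (↑F' : Set (Sym2 V))).Reachable u v) :
    (G.deleteEdges (↑F' : Set (Sym2 V))).dist u v ≤ D + F'.card * (2 * D + 1) := by
  classical
  set H : SimpleGraph V := G.deleteEdges (↑F' : Set (Sym2 V)) with hH
  -- a parent function towards v along shortest paths of G
  have hpa0 : ∀ w : V, ∃ x : V, w ≠ v → G.Adj w x ∧ G.dist x v + 1 = G.dist w v := by
    intro w
    by_cases hw : w = v
    · exact ⟨w, fun h => absurd hw h⟩
    · obtain ⟨x, h1, h2, _⟩ := stmt10_step (hconn w v) hw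
      exact ⟨x, fun _ => ⟨h1, h2⟩⟩
  choose pa hpa using hpa0
  -- hub set
  set C : Finset V := Finset.univ.filter (fun c => c ≠ v ∧ s(c, pa c) ∈ F') with hC
  have hCmem : ∀ c : V, c ∈ C ↔ (c ≠ v ∧ s(c, pa c) ∈ F') := by
    intro c; simp [hC]
  have hCcard : C.card ≤ F'.card := by
    apply Finset.card_le_card_of_injOn (fun c => s(c, pa c))
    · intro c hc
      exact ((hCmem c).mp hc).2
    · intro c1 h1 c2 h2 heq
      have h1' := (hCmem c1).mp h1
      have h2' := (hCmem c2).mp h2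
      have e1 := (hpa c1 h1'.1).2
      have e2 := (hpa c2 h2'.1).2
      rw [Sym2.eq_iff] at heq
      rcases heq with ⟨h, _⟩ | ⟨hac, hbc⟩
      · exact h
      · -- c1 = pa c2 and pa c1 = c2 force contradictory distances
        rw [hbc] at e1
        rw [← hac] at e2
        omega
  -- dichotomy: from any w, within G-distance to v, we either reach v or reach a hub in H
  have KL : ∀ n, ∀ w : V, G.dist w v = n →
      (∃ c ∈ C, ∃ q : H.Walk w c, q.length + 1 ≤ n) ∨ (∃ q : H.Walk w v, q.length ≤ n) := by
    intro n
    induction n with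
    | zero =>
      intro w hw
      have hwv : w = v := (hconn w v).dist_eq_zero_iff.mp hw
      subst hwv
      exact Or.inr ⟨SimpleGraph.Walk.nil, by simp⟩
    | succ n ih =>
      intro w hw
      have hwv : w ≠ v := by
        intro h; subst h; simp [SimpleGraph.dist_self] at hw
      obtain ⟨hadj, hdist⟩ := hpa w hwv
      by_cases hf : s(w, pa w) ∈ F'
      · exact Or.inl ⟨w, (hCmem w).mpr ⟨hwv, hf⟩, SimpleGraph.Walk.nil, by simp⟩
      · have hadjH : H.Adj w (pa w) := by
          rw [hH, SimpleGraph.deleteEdges_adj]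
          exact ⟨hadj, by simpa using hf⟩
        have hd : G.dist (pa w) v = n := by omega
        rcases ih (pa w) hd with ⟨c, hc, q, hq⟩ | ⟨q, hq⟩
        · refine Or.inl ⟨c, hc, SimpleGraph.Walk.cons hadjH q, ?_⟩
          simp only [SimpleGraph.Walk.length_cons]
          omega
        · refine Or.inr ⟨SimpleGraph.Walk.cons hadjH q, ?_⟩
          simp only [SimpleGraph.Walk.length_cons]
          omega
  -- all distances up to H.dist u v are realized
  have RD : ∀ m, m ≤ H.dist u v → ∃ w, H.Reachable w v ∧ H.dist w v = m := by
    have main : ∀ n, ∀ w, H.Reachable w v → H.dist w v = n →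
        ∀ m, m ≤ n → ∃ w', H.Reachable w' v ∧ H.dist w' v = m := by
      intro n
      induction n with
      | zero =>
        intro w hr hd m hm
        have : m = 0 := by omega
        exact ⟨w, hr, by omega⟩
      | succ n ih =>
        intro w hr hd m hm
        rcases Nat.eq_or_lt_of_le hm with h | h
        · exact ⟨w, hr, by omega⟩
        · have hne : w ≠ v := by
            intro h'; subst h'; simp [SimpleGraph.dist_self] at hd
          obtain ⟨x, _, hx, hxr⟩ := stmt10_step hr hne
          exact ih x hxr (by omega) m (by omega)
    intro m hm
    exact main _ u hreach rfl m hm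
  -- main counting argument
  by_contra hcon
  push_neg at hcon
  set k := F'.card with hk
  have key : ∀ t : ℕ, ∃ cc : V, t ≤ k →
      (cc ∈ C ∧ (D + 1 + t * (2 * D + 1)) + 1 ≤ H.dist cc v + D ∧
        H.dist cc v + 1 ≤ (D + 1 + t * (2 * D + 1)) + D) := by
    intro t
    by_cases ht : t ≤ k
    · set m := D + 1 + t * (2 * D + 1) with hm
      have hmle : m ≤ H.dist u v := by
        have h1 : t * (2 * D + 1) ≤ k * (2 * D + 1) := Nat.mul_le_mul_right _ ht
        omega
      obtain ⟨w, hwr, hwd⟩ := RD m hmle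
      have hGd : G.dist w v ≤ D := hdiam w v
      rcases KL (G.dist w v) w rfl with ⟨c, hc, q, hq⟩ | ⟨q, hq⟩
      · have hqD : q.length + 1 ≤ D := le_trans hq hGd
        have hrc : H.Reachable c v := (q.reverse.reachable).trans hwr
        obtain ⟨pw, hpw⟩ := hwr.exists_walk_length_eq_dist
        have hup : H.dist c v ≤ q.length + m := by
          have := SimpleGraph.dist_le (q.reverse.append pw)
          simpa [SimpleGraph.Walk.length_append, SimpleGraph.Walk.length_reverse, hpw, hwd]
            using this
        obtain ⟨pc, hpc⟩ := hrc.exists_walk_length_eq_dist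
        have hlow : m ≤ q.length + H.dist c v := by
          have := SimpleGraph.dist_le (q.append pc)
          rw [hwd] at this
          simpa [SimpleGraph.Walk.length_append, hpc] using this
        exact ⟨c, fun _ => ⟨hc, by omega, by omega⟩⟩
      · exfalso
        have := SimpleGraph.dist_le q
        omega
    · exact ⟨v, fun h => absurd h ht⟩
  choose cf hcf using key
  -- the map t ↦ cf t is injective on range (k+1), with values in C
  have hinj : ∀ t1 ∈ Finset.range (k + 1), ∀ t2 ∈ Finset.range (k + 1),
      cf t1 = cf t2 → t1 = t2 := by
    have main : ∀ t1 t2, t1 ≤ k → t2 ≤ k → t1 < t2 → cf t1 = cf t2 → False := by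
      intro t1 t2 h1 h2 hlt heq
      obtain ⟨_, hb1, hb2⟩ := hcf t1 h1
      obtain ⟨_, hb3, hb4⟩ := hcf t2 h2
      rw [heq] at hb2
      -- hb3 : m_{t2} + 1 ≤ dist + D,  hb2 : dist + 1 ≤ m_{t1} + D
      have hmul : (t1 + 1) * (2 * D + 1) ≤ t2 * (2 * D + 1) :=
        Nat.mul_le_mul_right _ hlt
      have hexp : (t1 + 1) * (2 * D + 1) = t1 * (2 * D + 1) + (2 * D + 1) := by ring
      omega
    intro t1 ht1 t2 ht2 heq
    simp only [Finset.mem_range] at ht1 ht2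
    rcases lt_trichotomy t1 t2 with h | h | h
    · exact absurd heq (fun he => main t1 t2 (by omega) (by omega) h he)
    · exact h
    · exact absurd heq.symm (fun he => main t2 t1 (by omega) (by omega) h he)
  have hcard : k + 1 ≤ C.card := by
    have := Finset.card_le_card_of_injOn cf
      (fun t ht => (hcf t (by simpa using Nat.lt_succ_iff.mp (Finset.mem_range.mp ht))).1)
      hinj
    simpa using this
  omega

/-- Let `G` be connected with diameter at most `D`, let `λ ≥ 2`, and let
`e = {u,v}` be an edge whose endpoints are `λ`-edge connected (they stay connected after
deleting any set of at most `λ − 1` edges of `G`). Then for every set `F` of edges of `G`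
with `e ∉ F` and `|F| ≤ λ − 2`, the graph `G − F` contains a cycle through `e` of length
at most `λ·(2D + 1) + 1`. -/
theorem stmt_10 {V : Type} [Fintype V] (G : SimpleGraph V) (D lam : ℕ) (hlam : 2 ≤ lam)
    (hconn : G.Connected) (hdiam : ∀ u v : V, G.dist u v ≤ D)
    (u v : V) (he : G.Adj u v)
    (huv : ∀ F' : Finset (Sym2 V), ↑F' ⊆ G.edgeSet → F'.card ≤ lam - 1 →
      (G.deleteEdges ↑F').Reachable u v)
    (F : Finset (Sym2 V)) (hFE : ↑F ⊆ G.edgeSet) (heF : s(u, v) ∉ F)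
    (hF : F.card ≤ lam - 2) :
    ∃ (x : V) (w : (G.deleteEdges ↑F).Walk x x), w.IsCycle ∧ s(u, v) ∈ w.edges ∧
      w.length ≤ lam * (2 * D + 1) + 1 := by
  classical
  set F' : Finset (Sym2 V) := insert s(u, v) F with hF'
  have hF'sub : (↑F' : Set (Sym2 V)) ⊆ G.edgeSet := by
    rw [hF', Finset.coe_insert]
    exact Set.insert_subset (G.mem_edgeSet.mpr he) hFE
  have hF'card : F'.card ≤ lam - 1 := by
    have h0 : F'.card ≤ F.card + 1 := by
      rw [hF']; exact Finset.card_insert_le _ _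
    omega
  have hreach : (G.deleteEdges (↑F' : Set (Sym2 V))).Reachable u v := huv F' hF'sub hF'card
  have hbound := stmt10_bound hconn hdiam F' hreach
  -- get a shortest path in the smaller graph
  obtain ⟨p, hpath, hplen⟩ := hreach.exists_path_of_dist
  -- transfer it to G.deleteEdges ↑F
  have hsub : ∀ ed ∈ p.edges, ed ∈ (G.deleteEdges (↑F : Set (Sym2 V))).edgeSet := by
    intro ed hed
    have h1 := p.edges_subset_edgeSet hed
    rw [SimpleGraph.edgeSet_deleteEdges] at h1 ⊢
    refine ⟨h1.1, fun hmem => h1.2 ?_⟩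
    rw [hF', Finset.coe_insert]
    exact Set.mem_insert_of_mem _ hmem
  set q : (G.deleteEdges (↑F : Set (Sym2 V))).Walk u v := p.transfer _ hsub with hq
  have hqpath : q.IsPath := hpath.transfer hsub
  have hqlen : q.length = p.length := SimpleGraph.Walk.length_transfer p hsub
  have hqedges : q.edges = p.edges := SimpleGraph.Walk.edges_transfer p hsub
  -- the edge s(u,v) is available in G.deleteEdges ↑F
  have hadj2 : (G.deleteEdges (↑F : Set (Sym2 V))).Adj u v := by
    rw [SimpleGraph.deleteEdges_adj]
    exact ⟨he, fun hmem => heF (Finset.mem_coe.mp hmem)⟩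
  -- the cycle
  refine ⟨u, SimpleGraph.Walk.cons hadj2 q.reverse, ?_, ?_, ?_⟩
  · rw [SimpleGraph.Walk.cons_isCycle_iff]
    refine ⟨hqpath.reverse, ?_⟩
    intro hmem
    rw [SimpleGraph.Walk.edges_reverse, List.mem_reverse, hqedges] at hmem
    have h1 := p.edges_subset_edgeSet hmem
    rw [SimpleGraph.edgeSet_deleteEdges] at h1
    apply h1.2
    rw [hF', Finset.coe_insert]
    exact Set.mem_insert _ _
  · simp [SimpleGraph.Walk.edges_cons]
  · have hlen : (SimpleGraph.Walk.cons hadj2 q.reverse).length = p.length + 1 := by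
      simp [SimpleGraph.Walk.length_cons, SimpleGraph.Walk.length_reverse, hqlen]
    rw [hlen, hplen]
    -- arithmetic: D + F'.card * (2D+1) + 1 ≤ lam * (2D+1) + 1
    obtain ⟨l, hl⟩ : ∃ l, lam = l + 2 := ⟨lam - 2, by omega⟩
    have h1 : F'.card * (2 * D + 1) ≤ (l + 1) * (2 * D + 1) :=
      Nat.mul_le_mul_right _ (by omega)
    have h2 : (l + 2) * (2 * D + 1) = (l + 1) * (2 * D + 1) + (2 * D + 1) := by ring
    have h3 : lam * (2 * D + 1) = (l + 2) * (2 * D + 1) := by rw [hl]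
    omega
end

section
/- There is an absolute constant c such that the following holds. For every connected finite simple graph G on n ≥ 2 vertices with diameter at most D and every integer λ ≥ 1, there exists a family of at most (c·λ·D)^{c·λ}·⌈log n⌉ subgraphs G₁, …, G_ℓ of G such that for every pair of vertices s, t and every set F of edges with |F| ≤ λ for which s and t are connected in G − F, there exists an index i with F ∩ E(G_i) = ∅ and such that s and t are connected in G_i at distance at most (λ + 1)·(2D + 1) in G_i. -/
open Finset

section aux

lemma spread_card (T : Finset ℕ) (k : ℕ)
    (h : ∀ p ∈ T, ∀ q ∈ T, p ≤ q → q - p ≤ k) : T.card ≤ k + 1 := by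
  rcases T.eq_empty_or_nonempty with rfl | hT
  · simp
  · have hmin := T.min'_mem hT
    have hsub : T ⊆ Finset.Icc (T.min' hT) (T.min' hT + k) := by
      intro q hq
      have h1 : T.min' hT ≤ q := T.min'_le q hq
      have h2 := h _ hmin _ hq h1
      simp only [Finset.mem_Icc]
      omega
    calc T.card ≤ (Finset.Icc (T.min' hT) (T.min' hT + k)).card := Finset.card_le_card hsub
      _ = k + 1 := by rw [Nat.card_Icc]; omega

/-- two-term binomial lower bound over ℕ -/
lemma two_term_binom (x y n : ℕ) :
    x ^ (n+1) + (n+1) * y * x ^ n ≤ (x + y) ^ (n+1) := by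
  induction n with
  | zero => simp [pow_succ]
  | succ n ih =>
    have key : (x+y) * (x^(n+1) + (n+1)*y*x^n)
        = x^(n+2) + (n+2)*y*x^(n+1) + (n+1)*(y*y)*x^n := by ring
    calc x ^ (n+2) + (n+2) * y * x ^ (n+1)
        ≤ (x+y) * (x^(n+1) + (n+1)*y*x^n) := by rw [key]; omega
      _ ≤ (x+y) * (x+y)^(n+1) := Nat.mul_le_mul_left _ ih
      _ = (x+y)^(n+2) := by ring

end aux

section walks
variable {V : Type} {G : SimpleGraph V}

lemma exists_walk_getVert_left {a b : V} (w : G.Walk a b) (i : ℕ) :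
    ∃ p : G.Walk a (w.getVert i), p.length ≤ i := by
  induction w generalizing i with
  | nil => exact ⟨SimpleGraph.Walk.nil, by simp⟩
  | cons h q ih =>
    cases i with
    | zero => exact ⟨SimpleGraph.Walk.nil, le_of_eq rfl⟩
    | succ i =>
      obtain ⟨p, hp⟩ := ih i
      exact ⟨SimpleGraph.Walk.cons h p, by simpa using Nat.succ_le_succ hp⟩

lemma exists_walk_getVert_right {a b : V} (w : G.Walk a b) (i : ℕ) :
    ∃ p : G.Walk (w.getVert i) b, p.length ≤ w.length - i := by
  induction w generalizing i with
  | nil => exact ⟨SimpleGraph.Walk.nil, by simp⟩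
  | cons h q ih =>
    cases i with
    | zero => exact ⟨SimpleGraph.Walk.cons h q, le_of_eq rfl⟩
    | succ i =>
      obtain ⟨p, hp⟩ := ih i
      exact ⟨p, by simpa using hp.trans (by omega)⟩

lemma reach_dist_triangle {u v w : V} (h1 : G.Reachable u v) (h2 : G.Reachable v w) :
    G.dist u w ≤ G.dist u v + G.dist v w := by
  obtain ⟨p, hp⟩ := h1.exists_walk_length_eq_dist
  obtain ⟨q, hq⟩ := h2.exists_walk_length_eq_dist
  rw [← hp, ← hq, ← SimpleGraph.Walk.length_append]
  exact SimpleGraph.dist_le _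

lemma firstFault {F : Finset (Sym2 V)} :
    ∀ {a b : V} (R : G.Walk a b), (∃ e ∈ R.edges, e ∈ F) →
    ∃ (w c : V), s(w, c) ∈ F ∧
      ∃ (P : (G.deleteEdges (F : Set (Sym2 V))).Walk a w) (R₂ : G.Walk c b),
        P.length + 1 + R₂.length ≤ R.length := by
  intro a b R
  induction R with
  | nil => rintro ⟨e, he, -⟩; simp at he
  | @cons a v b h q ih =>
    intro hex
    by_cases hf : s(a, v) ∈ F
    · exact ⟨a, v, hf, SimpleGraph.Walk.nil, q, by simp; omega⟩
    · have hex' : ∃ e ∈ q.edges, e ∈ F := by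
        obtain ⟨e, he, heF⟩ := hex
        rw [SimpleGraph.Walk.edges_cons, List.mem_cons] at he
        rcases he with rfl | he
        · exact absurd heF hf
        · exact ⟨e, he, heF⟩
      obtain ⟨w, c, hwc, P, R₂, hlen⟩ := ih hex'
      refine ⟨w, c, hwc, SimpleGraph.Walk.cons ?_ P, R₂, ?_⟩
      · rw [SimpleGraph.deleteEdges_adj]
        exact ⟨h, by simpa using hf⟩
      · simp only [SimpleGraph.Walk.length_cons]; omega

/-- Replacement path lemma: if `s,t` are connected in `G − F` and `G` has diameter at most
`D`, then their distance in `G − F` is at most `(2|F|+1)·D`. -/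
lemma replacement {V : Type} [Fintype V] (G : SimpleGraph V) (hc : G.Connected)
    (D : ℕ) (hD : 1 ≤ D) (hd : ∀ u v, G.dist u v ≤ D) (F : Finset (Sym2 V)) (s t : V)
    (hr : (G.deleteEdges (F : Set (Sym2 V))).Reachable s t) :
    (G.deleteEdges (F : Set (Sym2 V))).dist s t ≤ (2 * F.card + 1) * D := by
  classical
  set H := G.deleteEdges (F : Set (Sym2 V)) with hH
  by_cases hdd : H.dist s t ≤ D
  · exact hdd.trans (Nat.le_mul_of_pos_left D (by omega))
  set d := H.dist s t with hdd'
  obtain ⟨P, hP⟩ := hr.exists_walk_length_eq_dist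
  set xp : ℕ → V := fun i => P.getVert i with hxp
  -- every getVert is H-reachable from s
  have hreachL : ∀ p : ℕ, H.Reachable s (xp p) := fun p =>
    ⟨(exists_walk_getVert_left P p).choose⟩
  -- lower bound on internal distances
  have key1 : ∀ p q : ℕ, p ≤ q → q ≤ d → q - p ≤ H.dist (xp p) (xp q) := by
    intro p q hpq hqd
    obtain ⟨wA, hwA⟩ := exists_walk_getVert_left P p
    obtain ⟨wAq, _⟩ := exists_walk_getVert_left P q
    obtain ⟨wB, hwB⟩ := exists_walk_getVert_right P q
    have hreach : H.Reachable (xp p) (xp q) := ⟨wA.reverse.append wAq⟩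
    obtain ⟨Q, hQ⟩ := hreach.exists_walk_length_eq_dist
    have hb : d ≤ (wA.append (Q.append wB)).length := SimpleGraph.dist_le _
    rw [SimpleGraph.Walk.length_append, SimpleGraph.Walk.length_append] at hb
    have hwB' : wB.length ≤ d - q := by rw [hdd', ← hP]; exact hwB
    omega
  -- the set of fault endpoints
  set W : Finset V := Finset.univ.filter (fun v => ∃ e ∈ F, v ∈ e) with hW
  have hWcard : W.card ≤ 2 * F.card := by
    have hsub : W ⊆ F.biUnion (fun e => Finset.univ.filter (· ∈ e)) := by
      intro v hv
      rw [hW, mem_filter] at hv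
      obtain ⟨-, e, heF, hve⟩ := hv
      exact mem_biUnion.2 ⟨e, heF, by simp [hve]⟩
    refine (Finset.card_le_card hsub).trans ((Finset.card_biUnion_le).trans ?_)
    have h2 : ∀ e : Sym2 V, (Finset.univ.filter (· ∈ e)).card ≤ 2 := by
      intro e
      refine Sym2.ind (fun x y => ?_) e
      have : (Finset.univ.filter (· ∈ s(x, y))) ⊆ {x, y} := by
        intro a ha
        rw [mem_filter] at ha
        have := Sym2.mem_iff.1 ha.2
        simp [this]
      exact (Finset.card_le_card this).trans ((Finset.card_insert_le x {y}).trans (by simp))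
    calc (∑ e ∈ F, (Finset.univ.filter (· ∈ e)).card) ≤ ∑ _e ∈ F, 2 :=
          Finset.sum_le_sum (fun e _ => h2 e)
      _ = 2 * F.card := by rw [Finset.sum_const, smul_eq_mul, mul_comm]
  -- key2 : far apart positions admit close fault endpoints
  have key2 : ∀ p q : ℕ, q ≤ d → p + D + 1 ≤ q →
      ∃ w₁ ∈ W, ∃ w₂ ∈ W, H.Reachable (xp p) w₁ ∧ H.Reachable (xp q) w₂ ∧
        H.dist (xp p) w₁ + H.dist (xp q) w₂ + 1 ≤ D := by
    intro p q hqd hfar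
    obtain ⟨R, hR⟩ := hc.exists_walk_length_eq_dist (xp p) (xp q)
    have hRD : R.length ≤ D := by rw [hR]; exact hd _ _
    have hfault : ∃ e ∈ R.edges, e ∈ F := by
      by_contra hno
      push_neg at hno
      have hedges : ∀ e ∈ R.edges, e ∈ H.edgeSet := by
        intro e he
        rw [hH, SimpleGraph.edgeSet_deleteEdges]
        exact ⟨R.edges_subset_edgeSet he, hno e he⟩
      have htr := SimpleGraph.dist_le (R.transfer H hedges)
      rw [SimpleGraph.Walk.length_transfer] at htr
      have : H.dist (xp p) (xp q) ≤ D := htr.trans hRD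
      have := key1 p q (by omega) hqd
      omega
    obtain ⟨w, c, hwc, P₁, R₂, hlen⟩ := firstFault R hfault
    have hwW : w ∈ W := by
      rw [hW, mem_filter]
      exact ⟨mem_univ _, s(w, c), hwc, Sym2.mem_mk_left _ _⟩
    have hcW : c ∈ W := by
      rw [hW, mem_filter]
      exact ⟨mem_univ _, s(w, c), hwc, Sym2.mem_mk_right _ _⟩
    by_cases h2 : ∃ e ∈ R₂.edges, e ∈ F
    · have h2' : ∃ e ∈ R₂.reverse.edges, e ∈ F := by
        obtain ⟨e, he, heF⟩ := h2
        exact ⟨e, by rwa [SimpleGraph.Walk.edges_reverse, List.mem_reverse], heF⟩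
      obtain ⟨w', c', hwc', P₁', R₂', hlen'⟩ := firstFault R₂.reverse h2'
      have hw'W : w' ∈ W := by
        rw [hW, mem_filter]
        exact ⟨mem_univ _, s(w', c'), hwc', Sym2.mem_mk_left _ _⟩
      refine ⟨w, hwW, w', hw'W, ⟨P₁⟩, ⟨P₁'⟩, ?_⟩
      have d1 : H.dist (xp p) w ≤ P₁.length := SimpleGraph.dist_le _
      have d2 : H.dist (xp q) w' ≤ P₁'.length := SimpleGraph.dist_le _
      rw [SimpleGraph.Walk.length_reverse] at hlen'
      omega
    · push_neg at h2
      have hedges : ∀ e ∈ R₂.edges, e ∈ H.edgeSet := by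
        intro e he
        rw [hH, SimpleGraph.edgeSet_deleteEdges]
        exact ⟨R₂.edges_subset_edgeSet he, h2 e he⟩
      refine ⟨w, hwW, c, hcW, ⟨P₁⟩, ⟨(R₂.transfer H hedges).reverse⟩, ?_⟩
      have d1 : H.dist (xp p) w ≤ P₁.length := SimpleGraph.dist_le _
      have d2 : H.dist (xp q) c ≤ R₂.length := by
        have := SimpleGraph.dist_le ((R₂.transfer H hedges).reverse)
        rwa [SimpleGraph.Walk.length_reverse, SimpleGraph.Walk.length_transfer] at this
      omega
  -- counting
  set r₁ : ℕ := (D - 1) / 2 with hr₁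
  set served : ℕ → Prop := fun p => ∃ w ∈ W, H.Reachable (xp p) w ∧ H.dist (xp p) w ≤ r₁
    with hserved
  have hS : ((Finset.range (d + 1)).filter (fun p => ¬ served p)).card ≤ D + 1 := by
    apply spread_card _ D
    intro p hp q hq hpq
    rw [mem_filter, Finset.mem_range] at hp hq
    by_contra hcon
    have hfar : p + D + 1 ≤ q := by omega
    obtain ⟨w₁, hw₁, w₂, hw₂, hre₁, hre₂, hsum⟩ := key2 p q (by omega) hfar
    have : H.dist (xp p) w₁ ≤ r₁ ∨ H.dist (xp q) w₂ ≤ r₁ := by omega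
    rcases this with h | h
    · exact hp.2 ⟨w₁, hw₁, hre₁, h⟩
    · exact hq.2 ⟨w₂, hw₂, hre₂, h⟩
  have hfib : ∀ w : V, ((Finset.range (d + 1)).filter
      (fun p => H.Reachable (xp p) w ∧ H.dist (xp p) w ≤ r₁)).card ≤ D := by
    intro w
    have : ((Finset.range (d + 1)).filter
        (fun p => H.Reachable (xp p) w ∧ H.dist (xp p) w ≤ r₁)).card ≤ (D - 1) + 1 := by
      apply spread_card
      intro p hp q hq hpq
      rw [mem_filter, Finset.mem_range] at hp hq
      have htri : H.dist (xp p) (xp q) ≤ H.dist (xp p) w + H.dist w (xp q) :=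
        reach_dist_triangle hp.2.1 hq.2.1.symm
      rw [SimpleGraph.dist_comm (u := w)] at htri
      have hk := key1 p q hpq (by omega)
      omega
    omega
  have hsplit : ((Finset.range (d + 1)).filter served).card +
      ((Finset.range (d + 1)).filter (fun p => ¬ served p)).card
      = (Finset.range (d + 1)).card :=
    Finset.card_filter_add_card_filter_not (p := served)
  have hsub : (Finset.range (d + 1)).filter served ⊆
      W.biUnion (fun w => (Finset.range (d + 1)).filter
        (fun p => H.Reachable (xp p) w ∧ H.dist (xp p) w ≤ r₁)) := by
    intro p hp
    rw [mem_filter] at hp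
    obtain ⟨hpr, w, hwW', hre, hdist⟩ := hp
    exact mem_biUnion.2 ⟨w, hwW', mem_filter.2 ⟨hpr, hre, hdist⟩⟩
  have hserved_card : ((Finset.range (d + 1)).filter served).card ≤ W.card * D := by
    refine (Finset.card_le_card hsub).trans ((Finset.card_biUnion_le).trans ?_)
    calc (∑ w ∈ W, ((Finset.range (d + 1)).filter
          (fun p => H.Reachable (xp p) w ∧ H.dist (xp p) w ≤ r₁)).card)
        ≤ ∑ _w ∈ W, D := Finset.sum_le_sum (fun w _ => hfib w)
      _ = W.card * D := by rw [Finset.sum_const, smul_eq_mul]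
  have hWD : W.card * D ≤ 2 * F.card * D := Nat.mul_le_mul_right D hWcard
  have hcardrange : (Finset.range (d + 1)).card = d + 1 := Finset.card_range _
  have hfinal : d + 1 ≤ 2 * F.card * D + (D + 1) := by omega
  have : (2 * F.card + 1) * D = 2 * F.card * D + D := by ring
  omega
end walks

lemma twoL_pow_le (L : ℕ) (hL : 1 ≤ L) : (2*L)^L ≤ 2*(2*L-1)^L := by
  have h2L : (1:ℝ) ≤ 2*L := by exact_mod_cast by omega
  have hpos : (0:ℝ) < 2*L := by linarith
  have hber : (1 : ℝ) + (L : ℝ) * (-(1/(2*L))) ≤ (1 + (-(1/(2*L))))^L := by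
    apply one_add_mul_le_pow
    have h1 : (1:ℝ)/(2*L) ≤ 1 := by rw [div_le_one hpos]; linarith
    have h0 : (0:ℝ) ≤ 1/(2*L) := by positivity
    linarith
  have hhalf : (1:ℝ) + (L:ℝ) * (-(1/(2*L))) = 1/2 := by
    field_simp
    ring
  have h1m : (1 : ℝ) + (-(1/(2*L))) = (2*L - 1)/(2*L) := by
    field_simp
    ring
  rw [hhalf, h1m, div_pow] at hber
  rw [div_le_div_iff₀ (by norm_num) (by positivity)] at hber
  have hber2 : (2*(L:ℝ))^L ≤ 2 * (2*(L:ℝ) - 1)^L := by linarith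
  have hcast : ((2*L - 1 : ℕ) : ℝ) = 2*(L:ℝ) - 1 := by
    push_cast [Nat.cast_sub (by omega : 1 ≤ 2*L)]
    ring
  have : ((2*L)^L : ℝ) ≤ ((2*(2*L-1)^L : ℕ) : ℝ) := by
    push_cast [hcast]
    convert hber2 using 2 <;> push_cast <;> ring
  exact_mod_cast this

section count
variable {α : Type} [Fintype α] [DecidableEq α]

/-- Lower bound on the number of functions that are nonzero on `A` and zero on `B`. -/
lemma count_good (K L lam : ℕ) (A B : Finset α) (hA : A.card ≤ L) (hB : B.card ≤ lam)
    (hd : Disjoint A B) :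
    K^L * (K+1)^(Fintype.card α) ≤
      (Finset.univ.filter
        (fun g : α → Fin (K+1) => (∀ x ∈ A, g x ≠ 0) ∧ (∀ x ∈ B, g x = 0))).card
      * (K+1)^(L+lam) := by
  have hCsub : B ⊆ Finset.univ \ A := by
    intro x hx
    rw [Finset.mem_sdiff]
    exact ⟨Finset.mem_univ x, Finset.disjoint_right.1 hd hx⟩
  set C : Finset α := (Finset.univ \ A) \ B with hC
  have hCcard : C.card = Fintype.card α - A.card - B.card := by
    rw [hC, Finset.card_sdiff_of_subset hCsub, Finset.card_sdiff_of_subset (Finset.subset_univ A),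
      Finset.card_univ]
  have hab : A.card + B.card ≤ Fintype.card α := by
    have h1 : (A ∪ B).card = A.card + B.card := Finset.card_union_of_disjoint hd
    have h2 : (A ∪ B).card ≤ Finset.univ.card := Finset.card_le_univ _
    rw [Finset.card_univ] at h2
    omega
  set good : (α → Fin (K+1)) → Prop :=
    fun g => (∀ x ∈ A, g x ≠ 0) ∧ (∀ x ∈ B, g x = 0) with hgood
  have hinj : K^A.card * (K+1)^(Fintype.card α - A.card - B.card) ≤
      (Finset.univ.filter good).card := by
    have hcard1 : Fintype.card ({x // x ∈ A} → {v : Fin (K+1) // v ≠ 0}) = K^A.card := by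
      rw [Fintype.card_fun]
      congr 1
      · rw [Fintype.card_subtype_compl, Fintype.card_fin, Fintype.card_subtype_eq]
        omega
      · exact Fintype.card_coe A
    have hcard2 : Fintype.card ({x // x ∈ C} → Fin (K+1)) = (K+1)^C.card := by
      rw [Fintype.card_fun, Fintype.card_fin, Fintype.card_coe]
    set f : (({x // x ∈ A} → {v : Fin (K+1) // v ≠ 0}) × ({x // x ∈ C} → Fin (K+1))) →
        {g : α → Fin (K+1) // good g} :=
      fun p => ⟨fun x =>
        if hx : x ∈ A then (p.1 ⟨x, hx⟩ : {v : Fin (K+1) // v ≠ 0}).1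
        else if hx' : x ∈ B then 0
        else p.2 ⟨x, by rw [hC]; simp [hx, hx']⟩, by
          constructor
          · intro x hx
            simp only [dif_pos hx]
            exact (p.1 ⟨x, hx⟩).2
          · intro x hx
            have hxA : x ∉ A := Finset.disjoint_right.1 hd hx
            simp only [dif_neg hxA, dif_pos hx]⟩ with hf
    have hfinj : Function.Injective f := by
      intro p1 p2 h
      rw [Subtype.mk.injEq] at h
      have h' := congrFun h
      refine Prod.ext (funext ?_) (funext ?_)
      · rintro ⟨x, hx⟩
        have := h' x
        simp only [dif_pos hx] at this
        exact Subtype.ext this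
      · rintro ⟨x, hx⟩
        have hx' := hx
        rw [hC] at hx'
        simp only [Finset.mem_sdiff, Finset.mem_univ, true_and] at hx'
        have := h' x
        simp only [dif_neg hx'.1, dif_neg hx'.2] at this
        exact this
    have hcle := Fintype.card_le_of_injective f hfinj
    rw [Fintype.card_prod, hcard1, hcard2, hCcard] at hcle
    rwa [Fintype.card_subtype] at hcle
  refine le_trans ?_ (Nat.mul_le_mul_right _ hinj)
  have e1 : Fintype.card α - A.card - B.card + (L + lam)
      = (L - A.card) + ((lam - B.card) + Fintype.card α) := by omega
  rw [mul_assoc, ← pow_add, e1, pow_add, pow_add]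
  have e2 : K^L = K^A.card * K^(L - A.card) := by
    rw [← pow_add]
    congr 1
    omega
  rw [e2, mul_assoc]
  apply Nat.mul_le_mul_left
  apply Nat.mul_le_mul
  · exact Nat.pow_le_pow_left (by omega) _
  · have h1 : 1 ≤ (K+1)^(lam - B.card) := Nat.one_le_pow _ _ (by omega)
    calc (K+1)^(Fintype.card α) = 1 * (K+1)^(Fintype.card α) := (one_mul _).symm
      _ ≤ (K+1)^(lam - B.card) * (K+1)^(Fintype.card α) := Nat.mul_le_mul_right _ h1

end count

section sep
variable {α : Type} [Fintype α] [DecidableEq α]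


lemma filter_neg_card {β : Type*} (s : Finset β) (q : β → Prop) [DecidablePred q] :
    (s.filter (fun x => ¬ q x)).card = s.card - (s.filter q).card := by
  have h := Finset.card_filter_add_card_filter_not (s := s) (p := q)
  omega

lemma div_succ_mul_self (a b : ℕ) (ha : 1 ≤ a) : b ≤ (b / a + 1) * a := by
  have h1 := Nat.div_add_mod b a
  have h2 : b % a < a := Nat.mod_lt _ (by omega)
  have h3 : (b / a + 1) * a = a * (b / a) + a := by ring
  omega

lemma half_pow (a b n₀ : ℕ) (ha : 1 ≤ a) (hab : a < b) (hn : b ≤ n₀ * a) :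
    2 * (b - a)^n₀ ≤ b^n₀ := by
  have hn₀1 : n₀ = (n₀ - 1) + 1 := by
    rcases Nat.eq_zero_or_pos n₀ with h | h
    · subst h; simp at hn; omega
    · omega
  have hbin := two_term_binom (b-a) a (n₀ - 1)
  rw [← hn₀1] at hbin
  rw [Nat.sub_add_cancel (le_of_lt hab)] at hbin
  have hba : b - a ≤ n₀ * a := by omega
  have hstep : (b-a)^n₀ ≤ n₀ * a * (b-a)^(n₀-1) := by
    have he : (b-a)^n₀ = (b-a) * (b-a)^(n₀-1) := by
      conv_lhs => rw [hn₀1]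
      ring
    rw [he]
    exact Nat.mul_le_mul_right _ hba
  omega

set_option maxHeartbeats 2000000 in
lemma sepFamily (L lam : ℕ) (hL : 1 ≤ L) (hlam : 1 ≤ lam) :
    ∃ (ℓ : ℕ) (gs : Fin ℓ → (α → Fin (2*L - 1 + 1))),
      ℓ ≤ 3*(2*L)^lam * ((L+lam) * (1 + Nat.clog 2 (Fintype.card α + 1)) + 1) ∧
      ∀ A B : Finset α, A.card ≤ L → B.card ≤ lam → Disjoint A B →
        ∃ i, (∀ x ∈ A, gs i x ≠ 0) ∧ (∀ x ∈ B, gs i x = 0) := by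
  classical
  set K : ℕ := 2*L - 1 with hKdef
  set m : ℕ := Fintype.card α with hmdef
  set a : ℕ := K^L with hadef
  set b : ℕ := (K+1)^(L+lam) with hbdef
  have hK1 : 1 ≤ K := by omega
  have ha1 : 1 ≤ a := Nat.one_le_pow _ _ (by omega)
  have hab : a < b := by
    calc a = K^L := rfl
      _ < (K+1)^L := Nat.pow_lt_pow_left (by omega) (by omega)
      _ ≤ (K+1)^(L+lam) := Nat.pow_le_pow_right (by omega) (by omega)
  set P₀ : Finset (Finset α × Finset α) :=
    Finset.univ.filter (fun p => p.1.card ≤ L ∧ p.2.card ≤ lam ∧ Disjoint p.1 p.2) with hP₀def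
  set N : ℕ := P₀.card with hNdef
  -- greedy step
  have step : ∀ R : Finset (Finset α × Finset α), R ⊆ P₀ →
      ∃ g : α → Fin (K+1),
        (R.filter (fun p => ¬ ((∀ x ∈ p.1, g x ≠ 0) ∧ (∀ x ∈ p.2, g x = 0)))).card * b
          ≤ R.card * (b - a) := by
    intro R hR
    have hcnt : ∀ p ∈ R, a * (K+1)^m ≤
        (Finset.univ.filter
          (fun g : α → Fin (K+1) => (∀ x ∈ p.1, g x ≠ 0) ∧ (∀ x ∈ p.2, g x = 0))).card * b := by
      intro p hp
      have hp0 := hR hp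
      rw [hP₀def, Finset.mem_filter] at hp0
      exact count_good K L lam p.1 p.2 hp0.2.1 hp0.2.2.1 hp0.2.2.2
    have hdc : ∑ g : α → Fin (K+1),
          (R.filter (fun p => (∀ x ∈ p.1, g x ≠ 0) ∧ (∀ x ∈ p.2, g x = 0))).card
        = ∑ p ∈ R, (Finset.univ.filter
          (fun g : α → Fin (K+1) => (∀ x ∈ p.1, g x ≠ 0) ∧ (∀ x ∈ p.2, g x = 0))).card := by
      simp_rw [Finset.card_filter]
      exact Finset.sum_comm
    haveI : Nonempty (α → Fin (K+1)) := ⟨fun _ => 0⟩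
    have hpig : ∃ g : α → Fin (K+1),
        R.card * a ≤
          (R.filter (fun p => (∀ x ∈ p.1, g x ≠ 0) ∧ (∀ x ∈ p.2, g x = 0))).card * b := by
      by_contra hno
      push_neg at hno
      have hlt : ∑ g : α → Fin (K+1),
            (R.filter (fun p => (∀ x ∈ p.1, g x ≠ 0) ∧ (∀ x ∈ p.2, g x = 0))).card * b
          < ∑ _g : α → Fin (K+1), R.card * a :=
        Finset.sum_lt_sum_of_nonempty Finset.univ_nonempty (fun g _ => hno g)
      rw [← Finset.sum_mul, hdc, Finset.sum_const, Finset.card_univ, Fintype.card_fun,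
        Fintype.card_fin, smul_eq_mul] at hlt
      have hge : R.card * (a * (K+1)^m) ≤
          (∑ p ∈ R, (Finset.univ.filter
            (fun g : α → Fin (K+1) =>
              (∀ x ∈ p.1, g x ≠ 0) ∧ (∀ x ∈ p.2, g x = 0))).card) * b := by
        calc R.card * (a * (K+1)^m) = ∑ _p ∈ R, a * (K+1)^m := by
              rw [Finset.sum_const, smul_eq_mul]
          _ ≤ ∑ p ∈ R, (Finset.univ.filter
              (fun g : α → Fin (K+1) =>
                (∀ x ∈ p.1, g x ≠ 0) ∧ (∀ x ∈ p.2, g x = 0))).card * b :=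
            Finset.sum_le_sum hcnt
          _ = _ := (Finset.sum_mul _ _ _).symm
      have heq : (K+1)^m * (R.card * a) = R.card * (a * (K+1)^m) := by ring
      have hcontra := hge.trans_lt hlt
      rw [heq] at hcontra
      exact lt_irrefl _ hcontra
    obtain ⟨g, hg⟩ := hpig
    refine ⟨g, ?_⟩
    rw [filter_neg_card R (fun p => (∀ x ∈ p.1, g x ≠ 0) ∧ (∀ x ∈ p.2, g x = 0)),
      Nat.sub_mul, Nat.mul_sub]
    exact Nat.sub_le_sub_left hg _
  -- iteration
  have iter : ∀ j : ℕ, ∃ gs : Fin j → (α → Fin (K+1)),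
      (P₀.filter (fun p => ∀ i, ¬ ((∀ x ∈ p.1, gs i x ≠ 0) ∧ (∀ x ∈ p.2, gs i x = 0)))).card
        * b^j ≤ N * (b-a)^j := by
    intro j
    induction j with
    | zero =>
      refine ⟨Fin.elim0, ?_⟩
      rw [Finset.filter_true_of_mem (fun p _ => fun i => i.elim0)]
      simp [hNdef]
    | succ j ih =>
      obtain ⟨gs, hgs⟩ := ih
      set R := P₀.filter
        (fun p => ∀ i, ¬ ((∀ x ∈ p.1, gs i x ≠ 0) ∧ (∀ x ∈ p.2, gs i x = 0))) with hRdef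
      obtain ⟨g, hg⟩ := step R (Finset.filter_subset _ _)
      refine ⟨Fin.snoc gs g, ?_⟩
      have hsub : P₀.filter (fun p => ∀ i : Fin (j+1),
          ¬ ((∀ x ∈ p.1, (Fin.snoc gs g : Fin (j+1) → (α → Fin (K+1))) i x ≠ 0) ∧
             (∀ x ∈ p.2, (Fin.snoc gs g : Fin (j+1) → (α → Fin (K+1))) i x = 0)))
          ⊆ R.filter (fun p => ¬ ((∀ x ∈ p.1, g x ≠ 0) ∧ (∀ x ∈ p.2, g x = 0))) := by
        intro p hp
        rw [Finset.mem_filter] at hp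
        rw [Finset.mem_filter, hRdef, Finset.mem_filter]
        refine ⟨⟨hp.1, fun i => ?_⟩, ?_⟩
        · have := hp.2 i.castSucc
          rwa [Fin.snoc_castSucc] at this
        · have := hp.2 (Fin.last j)
          rwa [Fin.snoc_last] at this
      calc (P₀.filter (fun p => ∀ i : Fin (j+1),
              ¬ ((∀ x ∈ p.1, (Fin.snoc gs g : Fin (j+1) → (α → Fin (K+1))) i x ≠ 0) ∧
                 (∀ x ∈ p.2, (Fin.snoc gs g : Fin (j+1) → (α → Fin (K+1))) i x = 0)))).card
            * b^(j+1)
          ≤ (R.filter (fun p => ¬ ((∀ x ∈ p.1, g x ≠ 0) ∧ (∀ x ∈ p.2, g x = 0)))).card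
            * b^(j+1) := Nat.mul_le_mul_right _ (Finset.card_le_card hsub)
        _ = ((R.filter (fun p => ¬ ((∀ x ∈ p.1, g x ≠ 0) ∧ (∀ x ∈ p.2, g x = 0)))).card * b)
            * b^j := by ring
        _ ≤ (R.card * (b-a)) * b^j := Nat.mul_le_mul_right _ hg
        _ = (R.card * b^j) * (b-a) := by ring
        _ ≤ (N * (b-a)^j) * (b-a) := Nat.mul_le_mul_right _ hgs
        _ = N * (b-a)^(j+1) := by ring
  -- choose the final number of rounds
  set n₀ : ℕ := b / a + 1 with hn₀
  set M : ℕ := Nat.clog 2 N + 1 with hM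
  have hn₀a : b ≤ n₀ * a := by
    rw [hn₀]
    exact div_succ_mul_self a b ha1
  have hhalf : 2 * (b-a)^n₀ ≤ b^n₀ := half_pow a b n₀ ha1 hab hn₀a
  have hNM : N < 2^M := by
    have h1 : N ≤ 2^(Nat.clog 2 N) := Nat.le_pow_clog (by norm_num) N
    have h2 : (2:ℕ)^(Nat.clog 2 N) < 2^M := Nat.pow_lt_pow_right (by norm_num) (by omega)
    omega
  obtain ⟨gs, hgs⟩ := iter (n₀ * M)
  have hzero : (P₀.filter (fun p => ∀ i,
      ¬ ((∀ x ∈ p.1, gs i x ≠ 0) ∧ (∀ x ∈ p.2, gs i x = 0)))).card = 0 := by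
    by_contra hne
    have hc1 : 1 ≤ (P₀.filter (fun p => ∀ i,
        ¬ ((∀ x ∈ p.1, gs i x ≠ 0) ∧ (∀ x ∈ p.2, gs i x = 0)))).card := by omega
    have h1 : b^(n₀*M) ≤ N * (b-a)^(n₀*M) := by
      calc b^(n₀*M) = 1 * b^(n₀*M) := (one_mul _).symm
        _ ≤ _ * b^(n₀*M) := Nat.mul_le_mul_right _ hc1
        _ ≤ N * (b-a)^(n₀*M) := hgs
    have h2 : N * (b-a)^(n₀*M) < 2^M * (b-a)^(n₀*M) :=
      (Nat.mul_lt_mul_right (Nat.pow_pos (by omega))).2 hNM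
    have h3 : 2^M * (b-a)^(n₀*M) ≤ b^(n₀*M) := by
      rw [pow_mul, pow_mul, ← mul_pow]
      exact Nat.pow_le_pow_left hhalf M
    omega
  rw [Finset.card_eq_zero] at hzero
  refine ⟨n₀ * M, gs, ?_, ?_⟩
  · -- the bound
    have hn₀b : n₀ ≤ 3*(2*L)^lam := by
      have hb2 : b ≤ a * (2*(2*L)^lam) := by
        have h1 : b = (2*L)^L * (2*L)^lam := by
          rw [hbdef, show K + 1 = 2*L by omega, pow_add]
        have h2 : (2*L)^L ≤ 2*a := by
          rw [hadef, hKdef]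
          exact twoL_pow_le L hL
        calc b = (2*L)^L * (2*L)^lam := h1
          _ ≤ (2*a) * (2*L)^lam := Nat.mul_le_mul_right _ h2
          _ = a * (2*(2*L)^lam) := by ring
      have h3 : b / a ≤ 2*(2*L)^lam := by
        calc b / a ≤ (a * (2*(2*L)^lam)) / a := Nat.div_le_div_right hb2
          _ = 2*(2*L)^lam := Nat.mul_div_cancel_left _ (by omega)
      have h4 : 1 ≤ (2*L)^lam := Nat.one_le_pow _ _ (by omega)
      omega
    have hMb : M ≤ (L+lam) * (1 + Nat.clog 2 (m + 1)) + 1 := by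
      have hNbound : N ≤ (2*(m+1))^(L+lam) := by
        have hsub : P₀ ⊆ (Finset.univ.filter (fun A : Finset α => A.card ≤ L)) ×ˢ
            (Finset.univ.filter (fun B : Finset α => B.card ≤ lam)) := by
          intro p hp
          rw [hP₀def, Finset.mem_filter] at hp
          rw [Finset.mem_product, Finset.mem_filter, Finset.mem_filter]
          exact ⟨⟨Finset.mem_univ _, hp.2.1⟩, ⟨Finset.mem_univ _, hp.2.2.1⟩⟩
        have hPA : ∀ (c : ℕ), (Finset.univ.filter (fun A : Finset α => A.card ≤ c)).card
            ≤ (2*(m+1))^c := by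
          intro c
          have hsub2 : (Finset.univ.filter (fun A : Finset α => A.card ≤ c)) ⊆
              (Finset.range (c+1)).biUnion (fun i => Finset.univ.powersetCard i) := by
            intro A hA
            rw [Finset.mem_filter] at hA
            rw [Finset.mem_biUnion]
            exact ⟨A.card, Finset.mem_range.2 (by omega),
              Finset.mem_powersetCard_univ.2 rfl⟩
          calc (Finset.univ.filter (fun A : Finset α => A.card ≤ c)).card
              ≤ ((Finset.range (c+1)).biUnion (fun i => Finset.univ.powersetCard i)).card :=
                Finset.card_le_card hsub2
            _ ≤ ∑ i ∈ Finset.range (c+1), (Finset.univ.powersetCard i).card :=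
                Finset.card_biUnion_le
            _ ≤ ∑ i ∈ Finset.range (c+1), (m+1)^c := by
                apply Finset.sum_le_sum
                intro i hi
                rw [Finset.mem_range] at hi
                rw [Finset.card_powersetCard, Finset.card_univ]
                calc (Nat.choose m i) ≤ m^i := Nat.choose_le_pow m i
                  _ ≤ (m+1)^i := Nat.pow_le_pow_left (by omega) _
                  _ ≤ (m+1)^c := Nat.pow_le_pow_right (by omega) (by omega)
            _ = (c+1) * (m+1)^c := by rw [Finset.sum_const, Finset.card_range, smul_eq_mul]
            _ ≤ 2^c * (m+1)^c := Nat.mul_le_mul_right _ (by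
                have := @Nat.lt_two_pow_self c
                omega)
            _ = (2*(m+1))^c := by rw [mul_pow]
        calc N ≤ ((Finset.univ.filter (fun A : Finset α => A.card ≤ L)) ×ˢ
              (Finset.univ.filter (fun B : Finset α => B.card ≤ lam))).card :=
            Finset.card_le_card hsub
          _ = (Finset.univ.filter (fun A : Finset α => A.card ≤ L)).card *
              (Finset.univ.filter (fun B : Finset α => B.card ≤ lam)).card :=
            Finset.card_product _ _
          _ ≤ (2*(m+1))^L * (2*(m+1))^lam := Nat.mul_le_mul (hPA L) (hPA lam)
          _ = (2*(m+1))^(L+lam) := by rw [← pow_add]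
      have hclogN : Nat.clog 2 N ≤ (L+lam) * (1 + Nat.clog 2 (m+1)) := by
        rw [Nat.clog_le_iff_le_pow (by norm_num)]
        calc N ≤ (2*(m+1))^(L+lam) := hNbound
          _ ≤ (2^(1 + Nat.clog 2 (m+1)))^(L+lam) := by
              apply Nat.pow_le_pow_left
              rw [pow_add, pow_one]
              exact Nat.mul_le_mul_left _ (Nat.le_pow_clog (by norm_num) _)
          _ = 2^((1 + Nat.clog 2 (m+1)) * (L+lam)) := by rw [← pow_mul]
          _ = 2^((L+lam) * (1 + Nat.clog 2 (m+1))) := by rw [mul_comm]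
      omega
    calc n₀ * M ≤ (3*(2*L)^lam) * ((L+lam) * (1 + Nat.clog 2 (m+1)) + 1) :=
        Nat.mul_le_mul hn₀b hMb
      _ = 3*(2*L)^lam * ((L+lam) * (1 + Nat.clog 2 (Fintype.card α + 1)) + 1) := by
        rw [hmdef]
  · -- the covering property
    intro A B hA hB hd
    have hmem : (A, B) ∈ P₀ := by
      rw [hP₀def, Finset.mem_filter]
      exact ⟨Finset.mem_univ _, hA, hB, hd⟩
    by_contra hno
    push_neg at hno
    have : (A, B) ∈ P₀.filter (fun p => ∀ i,
        ¬ ((∀ x ∈ p.1, gs i x ≠ 0) ∧ (∀ x ∈ p.2, gs i x = 0))) := by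
      rw [Finset.mem_filter]
      refine ⟨hmem, fun i => ?_⟩
      intro ⟨h1, h2⟩
      obtain ⟨x, hx, hxx⟩ := hno i h1
      exact hxx (h2 x hx)
    rw [hzero] at this
    simp at this

end sep



lemma final_bound (n D lam m : ℕ) (hn : 2 ≤ n) (hD : 1 ≤ D) (hlam : 1 ≤ lam)
    (hm : m + 1 ≤ n^3) :
    3*(2*((lam+1)*(2*D+1)))^lam * ((((lam+1)*(2*D+1))+lam) * (1 + Nat.clog 2 (m+1)) + 1)
      ≤ (100*lam*D)^(100*lam) * Nat.clog 2 n := by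
  set cl := Nat.clog 2 n with hcl
  have hcl1 : 1 ≤ cl := Nat.clog_pos (by norm_num) hn
  have hclm : Nat.clog 2 (m+1) ≤ 3*cl := by
    rw [Nat.clog_le_iff_le_pow (by norm_num)]
    calc m + 1 ≤ n^3 := hm
      _ ≤ (2^cl)^3 := Nat.pow_le_pow_left (Nat.le_pow_clog (by norm_num) n) 3
      _ = 2^(3*cl) := by rw [← pow_mul, mul_comm]
  have hLD : (lam+1)*(2*D+1) ≤ 6*(lam*D) := by
    calc (lam+1)*(2*D+1) ≤ (2*lam)*(3*D) := Nat.mul_le_mul (by omega) (by omega)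
      _ = 6*(lam*D) := by ring
  have hlamD : 1 ≤ lam*D := by
    calc 1 = 1*1 := (one_mul 1).symm
      _ ≤ lam*D := Nat.mul_le_mul hlam hD
  -- first factor
  have h1 : 3*(2*((lam+1)*(2*D+1)))^lam ≤ 3*(12*(lam*D))^lam := by
    apply Nat.mul_le_mul_left
    apply Nat.pow_le_pow_left
    omega
  -- second factor
  have h2 : (((lam+1)*(2*D+1))+lam) * (1 + Nat.clog 2 (m+1)) + 1 ≤ 29*((lam*D)*cl) := by
    have ha : ((lam+1)*(2*D+1))+lam ≤ 7*(lam*D) := by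
      have : lam ≤ lam*D := Nat.le_mul_of_pos_right lam (by omega)
      omega
    have hb : 1 + Nat.clog 2 (m+1) ≤ 4*cl := by omega
    calc (((lam+1)*(2*D+1))+lam) * (1 + Nat.clog 2 (m+1)) + 1
        ≤ (7*(lam*D)) * (4*cl) + 1 := by
          have := Nat.mul_le_mul ha hb
          omega
      _ = 28*((lam*D)*cl) + 1 := by ring
      _ ≤ 29*((lam*D)*cl) := by
          have h1' : 1 ≤ (lam*D)*cl := by
            calc 1 = 1*1 := (one_mul 1).symm
              _ ≤ (lam*D)*cl := Nat.mul_le_mul hlamD hcl1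
          omega
  calc 3*(2*((lam+1)*(2*D+1)))^lam * ((((lam+1)*(2*D+1))+lam) * (1 + Nat.clog 2 (m+1)) + 1)
      ≤ (3*(12*(lam*D))^lam) * (29*((lam*D)*cl)) := Nat.mul_le_mul h1 h2
    _ = (87*(lam*D) * (12*(lam*D))^lam) * cl := by ring
    _ ≤ ((100*lam*D) * (100*lam*D)^lam) * cl := by
        apply Nat.mul_le_mul_right
        apply Nat.mul_le_mul
        · have : 87*(lam*D) ≤ 100*(lam*D) := Nat.mul_le_mul_right _ (by omega)
          calc 87*(lam*D) ≤ 100*(lam*D) := this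
            _ = 100*lam*D := by ring
        · apply Nat.pow_le_pow_left
          calc 12*(lam*D) ≤ 100*(lam*D) := Nat.mul_le_mul_right _ (by omega)
            _ = 100*lam*D := by ring
    _ = (100*lam*D)^(lam+1) * cl := by rw [pow_succ]; ring
    _ ≤ (100*lam*D)^(100*lam) * cl := by
        apply Nat.mul_le_mul_right
        apply Nat.pow_le_pow_right
        · have : 1 ≤ 100*(lam*D) := le_trans hlamD (Nat.le_mul_of_pos_left _ (by omega))
          calc 1 ≤ 100*(lam*D) := this
            _ = 100*lam*D := by ring
        · omega

lemma sym2_card_bound (V : Type) [Fintype V] [DecidableEq V] (hn : 2 ≤ Fintype.card V) :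
    Fintype.card (Sym2 V) + 1 ≤ (Fintype.card V)^3 := by
  set n := Fintype.card V with hndef
  have hc : Fintype.card (Sym2 V) = (n+1).choose 2 := Sym2.card
  have h2 : (n+1).choose 2 = (n+1)*n/2 := by
    rw [Nat.choose_two_right]
    simp
  have h3 : (n+1)*n/2 ≤ n*n := by
    have h4 : (n+1)*n ≤ (n*n)*2 := by nlinarith
    omega
  have h5 : n*n + 1 ≤ n^3 := by
    have h6 : 2*(n*n) ≤ n*(n*n) := Nat.mul_le_mul_right _ hn
    have h7 : n^3 = n*(n*n) := by ring
    nlinarith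
  omega

/-- There is an absolute constant `c` such that every connected graph `G` on
`n ≥ 2` vertices with diameter at most `D` admits, for every `λ ≥ 1`, a family of at most
`(c·λ·D)^(c·λ)·⌈log n⌉` subgraphs `G₁, …, G_ℓ` of `G` such that for all vertices `s, t` and
every set `F` of at most `λ` edges with `s` and `t` connected in `G − F`, some `Gᵢ`
satisfies `F ∩ E(Gᵢ) = ∅` and `s` and `t` are connected in `Gᵢ` at distance at most
`(λ + 1)·(2D + 1)` in `Gᵢ`. -/
theorem stmt_14 :
    ∃ c : ℕ, ∀ (V : Type) [Fintype V], ∀ (G : SimpleGraph V) (D lam : ℕ),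
      G.Connected → (∀ u v : V, G.dist u v ≤ D) → 2 ≤ Fintype.card V → 1 ≤ lam →
      ∃ (ℓ : ℕ) (Gs : Fin ℓ → SimpleGraph V),
        ℓ ≤ (c * lam * D) ^ (c * lam) * Nat.clog 2 (Fintype.card V) ∧
        (∀ i, Gs i ≤ G) ∧
        ∀ (s t : V) (F : Finset (Sym2 V)), ↑F ⊆ G.edgeSet → F.card ≤ lam →
          (G.deleteEdges ↑F).Reachable s t →
          ∃ i : Fin ℓ, Disjoint (↑F : Set (Sym2 V)) (Gs i).edgeSet ∧
            (Gs i).Reachable s t ∧ (Gs i).dist s t ≤ (lam + 1) * (2 * D + 1) := by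
  classical
  refine ⟨100, ?_⟩
  intro V _ G D lam hconn hdiam hcard hlam
  have hD : 1 ≤ D := by
    obtain ⟨u, v, huv⟩ := Fintype.exists_pair_of_one_lt_card (α := V) (by omega)
    have h1 : 0 < G.dist u v := hconn.pos_dist_of_ne huv
    have h2 := hdiam u v
    omega
  set L : ℕ := (lam + 1) * (2*D + 1) with hLdef
  have hL1 : 1 ≤ L := by
    have : 1*1 ≤ (lam+1)*(2*D+1) := Nat.mul_le_mul (by omega) (by omega)
    omega
  obtain ⟨ℓ, gs, hℓ, hsep⟩ := sepFamily (α := Sym2 V) L lam hL1 hlam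
  refine ⟨ℓ, fun i => G.deleteEdges {e | gs i e = 0}, ?_, ?_, ?_⟩
  · refine hℓ.trans ?_
    rw [hLdef]
    exact final_bound (Fintype.card V) D lam (Fintype.card (Sym2 V)) hcard hD hlam
      (sym2_card_bound V hcard)
  · intro i
    exact SimpleGraph.deleteEdges_le _
  · intro s t F hFE hFcard hreach
    have hrep := replacement G hconn D hD hdiam F s t hreach
    have hdist : (G.deleteEdges (F : Set (Sym2 V))).dist s t ≤ L := by
      have h1 : (2*F.card+1)*D ≤ (2*lam+1)*D := Nat.mul_le_mul_right _ (by omega)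
      have h2 : (2*lam+1)*D ≤ L := by
        rw [hLdef]
        have e1 : (lam+1)*(2*D+1) = 2*(lam*D) + lam + 2*D + 1 := by ring
        have e2 : (2*lam+1)*D = 2*(lam*D) + D := by ring
        omega
      omega
    obtain ⟨P, hP⟩ := hreach.exists_walk_length_eq_dist
    have hAcard : P.edges.toFinset.card ≤ L := by
      calc P.edges.toFinset.card ≤ P.edges.length := P.edges.toFinset_card_le
        _ = P.length := P.length_edges
        _ ≤ L := by rw [hP]; exact hdist
    have hdisj : Disjoint P.edges.toFinset F := by
      rw [Finset.disjoint_left]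
      intro e heA heF
      have h3 : e ∈ (G.deleteEdges (F : Set (Sym2 V))).edgeSet :=
        P.edges_subset_edgeSet (List.mem_toFinset.1 heA)
      rw [SimpleGraph.edgeSet_deleteEdges] at h3
      exact h3.2 (by exact_mod_cast heF)
    obtain ⟨i, hgood1, hgood2⟩ := hsep P.edges.toFinset F hAcard hFcard hdisj
    have hedges : ∀ e ∈ P.edges, e ∈ (G.deleteEdges {e | gs i e = 0}).edgeSet := by
      intro e he
      rw [SimpleGraph.edgeSet_deleteEdges]
      constructor
      · have h3 : e ∈ (G.deleteEdges (F : Set (Sym2 V))).edgeSet := P.edges_subset_edgeSet he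
        rw [SimpleGraph.edgeSet_deleteEdges] at h3
        exact h3.1
      · intro hze
        exact hgood1 e (List.mem_toFinset.2 he) hze
    refine ⟨i, ?_, ⟨P.transfer _ hedges⟩, ?_⟩
    · rw [Set.disjoint_left]
      intro e heF heE
      rw [SimpleGraph.edgeSet_deleteEdges] at heE
      exact heE.2 (hgood2 e (by exact_mod_cast heF))
    · have h4 := SimpleGraph.dist_le (P.transfer _ hedges)
      rw [SimpleGraph.Walk.length_transfer, hP] at h4
      calc (G.deleteEdges {e | gs i e = 0}).dist s t
          ≤ (G.deleteEdges (F : Set (Sym2 V))).dist s t := h4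
        _ ≤ L := hdist
        _ = (lam + 1) * (2 * D + 1) := by rw [hLdef]
end
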